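/- arXiv:1003.4808 — 7 statements merged into one kernel-verified Lean document; each statement's English description precedes it below -/
import Mathlib

section
/- Let N ≥ 2 be an integer and for 0 ≤ m ≤ N−1 set a_m = ∏_{j=1}^{m} 4·sin²(πj/N) (with a_0 = 1). Then for 0 ≤ m ≤ N−2 one has a_{m+1} ≥ a_m if and only if sin(π(m+1)/N) ≥ 1/2, i.e., if and only if N/6 ≤ m+1 ≤ 5N/6. Consequently the maximum of a_m over 0 ≤ m ≤ N−1 is attained at m = ⌊5N/6⌋. -/
/-!
Since `a (m + 1) = a m * 4 sin²(π(m+1)/N)` with `a m > 0`, the sequence rises exactly when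
`sin(π(m+1)/N) ≥ 1/2`, i.e. when `N/6 ≤ m + 1 ≤ 5N/6`: it falls, rises up to `⌊5N/6⌋`, then falls.
The peak at `⌊5N/6⌋` also beats the initial falling stretch because
`a 0 = 1 ≤ N² = a (N - 1) ≤ a ⌊5N/6⌋`, where `a (N - 1) = ∏_{0<j<N} |1 - q^j|² = N²` is the norm
squared of the cyclotomic identity `∏_{0<j<N} (1 - q^j) = N`.
-/

open Real Finset

theorem Real.one_half_le_sin_iff {θ : ℝ} (h₀ : 0 ≤ θ) (h₁ : θ ≤ π) :
    1 / 2 ≤ sin θ ↔ π / 6 ≤ θ ∧ θ ≤ 5 * π / 6 := by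
  have hπ := pi_pos
  -- `sin θ = cos |θ - π / 2|`, and `cos` is strictly antitone on `[0, π]`.
  rw [← cos_sub_pi_div_two, ← cos_abs, ← cos_pi_div_three,
    strictAntiOn_cos.le_iff_ge ⟨by positivity, by linarith⟩
      ⟨abs_nonneg _, by rw [abs_le]; constructor <;> linarith⟩, abs_le]
  constructor <;> rintro ⟨_, _⟩ <;> constructor <;> linarith

theorem one_half_le_sin_pi_mul_div_iff {x N : ℝ} (hN : 0 < N) (h₀ : 0 ≤ x) (h₁ : x ≤ N) :
    1 / 2 ≤ sin (π * x / N) ↔ N / 6 ≤ x ∧ x ≤ 5 * N / 6 := by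
  have hπ := pi_pos
  rw [one_half_le_sin_iff (by positivity) (by rw [div_le_iff₀ hN]; nlinarith),
    div_le_div_iff₀ (by norm_num) hN, div_le_div_iff₀ hN (by norm_num)]
  constructor <;> rintro ⟨_, _⟩ <;> constructor <;> nlinarith

theorem sin_pi_mul_div_pos {x N : ℝ} (h₀ : 0 < x) (h₁ : x < N) : 0 < sin (π * x / N) := by
  have hπ := pi_pos
  apply sin_pos_of_pos_of_lt_pi (by have := h₀.trans h₁; positivity)
  rw [div_lt_iff₀ (h₀.trans h₁)]; nlinarith

theorem prod_Icc_four_mul_sin_sq (n : ℕ) :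
    ∏ j ∈ Icc 1 n, 4 * sin (π * j / (n + 1)) ^ 2 = ((n : ℝ) + 1) ^ 2 := by
  set μ := Complex.exp (2 * π * Complex.I / (n + 1))
  have hμ : IsPrimitiveRoot μ (n + 1) := by
    simpa using Complex.isPrimitiveRoot_exp (n + 1) n.succ_ne_zero
  have hfactor (k : ℕ) : ‖1 - μ ^ k‖ ^ 2 = 4 * sin (π * k / (n + 1)) ^ 2 := by
    have : μ ^ k = Complex.exp (Complex.I * ↑(2 * π * k / (n + 1))) := by
      rw [← Complex.exp_nat_mul]; push_cast; ring_nf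
    rw [norm_sub_rev, this, Complex.norm_exp_I_mul_ofReal_sub_one, norm_mul, Real.norm_two,
      Real.norm_eq_abs, mul_pow, sq_abs]
    ring_nf
  have h := congrArg (‖·‖ ^ 2) hμ.prod_one_sub_pow_eq_order
  simp only [norm_prod, ← prod_pow, hfactor] at h
  rw [range_eq_Ico, prod_Ico_add' (fun j : ℕ ↦ 4 * sin (π * j / (n + 1)) ^ 2),
    zero_add, Ico_add_one_right_eq_Icc] at h
  rw [h, ← Nat.cast_succ, Complex.norm_natCast, Nat.cast_succ]

theorem apply_le_apply_of_le_succ_iff {α : Type*} [LinearOrder α] {f : ℕ → α} {n p q : ℕ}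
    (hq : q < n) (hstep : ∀ i, i + 1 < n → (f i ≤ f (i + 1) ↔ p ≤ i + 1 ∧ i + 1 ≤ q))
    (hends : f 0 ≤ f (n - 1)) {m : ℕ} (hm : m < n) : f m ≤ f q := by
  have hdown : ∀ i, i + 1 < n → ¬(p ≤ i + 1 ∧ i + 1 ≤ q) → f (i + 1) ≤ f i :=
    fun i hi h ↦ (not_le.mp (mt (hstep i hi).mp h)).le
  have hmid : MonotoneOn f (Set.Icc p q) := monotoneOn_of_le_succ Set.ordConnected_Icc
    fun i _ _ hi ↦ by
      rw [Order.succ_eq_add_one, Set.mem_Icc] at hi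
      exact (hstep i (by omega)).mpr hi
  have hright : AntitoneOn f (Set.Icc q (n - 1)) := antitoneOn_of_succ_le Set.ordConnected_Icc
    fun i _ hi hi' ↦ by
      rw [Order.succ_eq_add_one, Set.mem_Icc] at hi'
      exact hdown i (by omega) (by rw [Set.mem_Icc] at hi; omega)
  rcases lt_or_ge m p with hmp | hpm
  · have hleft : AntitoneOn f (Set.Iic m) := antitoneOn_of_succ_le Set.ordConnected_Iic
      fun i _ _ hi ↦ by
        rw [Order.succ_eq_add_one, Set.mem_Iic] at hi
        exact hdown i (by omega) (by omega)
    calc f m ≤ f 0 := hleft (Set.mem_Iic.mpr (Nat.zero_le m)) Set.self_mem_Iic (Nat.zero_le m)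
      _ ≤ f (n - 1) := hends
      _ ≤ f q := hright ⟨le_rfl, by omega⟩ ⟨by omega, le_rfl⟩ (by omega)
  rcases le_or_gt m q with hmq | hqm
  · exact hmid ⟨hpm, hmq⟩ ⟨hpm.trans hmq, le_rfl⟩ hmq
  · exact hright ⟨le_rfl, by omega⟩ ⟨hqm.le, by omega⟩ hqm.le

noncomputable def kashaevTerm (N m : ℕ) : ℝ := ∏ j ∈ Icc 1 m, 4 * sin (π * j / N) ^ 2

@[simp] theorem kashaevTerm_zero (N : ℕ) : kashaevTerm N 0 = 1 := by simp [kashaevTerm]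

theorem kashaevTerm_succ (N m : ℕ) :
    kashaevTerm N (m + 1) = kashaevTerm N m * (4 * sin (π * (m + 1) / N) ^ 2) := by
  rw [kashaevTerm, prod_Icc_succ_top (by omega), Nat.cast_succ, kashaevTerm]

theorem kashaevTerm_pos {N m : ℕ} (hm : m < N) : 0 < kashaevTerm N m :=
  prod_pos fun j hj ↦ by
    obtain ⟨hj₁, hjm⟩ := mem_Icc.mp hj
    have : 0 < sin (π * j / N) :=
      sin_pi_mul_div_pos (by exact_mod_cast hj₁) (by exact_mod_cast hjm.trans_lt hm)
    positivity

theorem kashaevTerm_le_succ_iff {N m : ℕ} (hm : m + 1 < N) :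
    kashaevTerm N m ≤ kashaevTerm N (m + 1) ↔ 1 / 2 ≤ sin (π * (m + 1) / N) := by
  have hsin : 0 < sin (π * (m + 1) / N) :=
    sin_pi_mul_div_pos (by positivity) (by exact_mod_cast hm)
  rw [kashaevTerm_succ, le_mul_iff_one_le_right (kashaevTerm_pos (by omega))]
  constructor <;> intro h <;> nlinarith

theorem kashaevTerm_sub_one {N : ℕ} (hN : 0 < N) : kashaevTerm N (N - 1) = (N : ℝ) ^ 2 := by
  obtain ⟨n, rfl⟩ := Nat.exists_eq_add_of_lt hN
  simpa [kashaevTerm] using prod_Icc_four_mul_sin_sq n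

/-- For `N ≥ 2` let `a m = ∏_{j=1}^m 4 sin²(πj/N)`. For
`0 ≤ m ≤ N-2`, `a (m+1) ≥ a m` iff `sin(π(m+1)/N) ≥ 1/2`, iff
`N/6 ≤ m+1 ≤ 5N/6`. Consequently the maximum of `a m` over `0 ≤ m ≤ N-1`
is attained at `m = ⌊5N/6⌋`. -/
theorem stmt2 (N : ℕ) (hN : 2 ≤ N) (a : ℕ → ℝ)
    (ha : ∀ m, a m = ∏ j ∈ Finset.Icc 1 m, 4 * Real.sin (Real.pi * j / N) ^ 2) :
    (∀ m : ℕ, m ≤ N - 2 →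
      ((a m ≤ a (m + 1) ↔ 1 / 2 ≤ Real.sin (Real.pi * (m + 1) / N)) ∧
       (1 / 2 ≤ Real.sin (Real.pi * (m + 1) / N) ↔
          (N : ℝ) / 6 ≤ (m : ℝ) + 1 ∧ (m : ℝ) + 1 ≤ 5 * (N : ℝ) / 6))) ∧
    (∀ m : ℕ, m ≤ N - 1 → a m ≤ a ((5 * N) / 6)) := by
  obtain rfl : a = kashaevTerm N := funext ha
  have hNpos : (0 : ℝ) < N := by exact_mod_cast (by omega : 0 < N)
  have hsin_iff (m : ℕ) (hm : m + 1 < N) :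
      1 / 2 ≤ sin (π * (m + 1) / N) ↔ (N : ℝ) / 6 ≤ (m : ℝ) + 1 ∧ (m : ℝ) + 1 ≤ 5 * (N : ℝ) / 6 :=
    one_half_le_sin_pi_mul_div_iff hNpos (by positivity) (by exact_mod_cast hm.le)
  refine ⟨fun m hm ↦ ⟨kashaevTerm_le_succ_iff (by omega), hsin_iff m (by omega)⟩, fun m hm ↦ ?_⟩
  -- `(N + 5) / 6 = ⌈N / 6⌉` is where the sequence starts rising.
  refine apply_le_apply_of_le_succ_iff (n := N) (p := (N + 5) / 6) (by omega)
    (fun i hi ↦ ?_) ?_ (by omega)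
  · rw [kashaevTerm_le_succ_iff hi, hsin_iff i hi, div_le_iff₀ (by norm_num),
      le_div_iff₀ (by norm_num)]
    norm_cast
    omega
  · rw [kashaevTerm_zero, kashaevTerm_sub_one (by omega)]
    exact one_le_pow₀ (by exact_mod_cast (by omega : 1 ≤ N))
end

section
/- For every real θ with 0 < θ < 1, lim_{N→∞} (1/N) · Σ_{j=1}^{⌊θN⌋} log(2·sin(πj/N)) = ∫_0^θ log(2·sin(πt)) dt. -/
/-!
Since `2 sin (π t) = t · 2π sinc (π t)`, the summand splits as `log t + g t` with
`g t = log (2π sinc (π t))` continuous on `[0, θ]`. The Riemann sums of `g` converge by uniform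
continuity. For `log`, which is monotone, the right Riemann sum over `[1/N, (⌊θN⌋+1)/N]` lies
below the integral and exceeds it by at most `(1/N) (log ((⌊θN⌋+1)/N) - log (1/N))`, which
tends to `0` because `x log x → 0`; the integral of `log` from `1/N` tends to the improper one.
-/

open Real Finset Filter MeasureTheory intervalIntegral Topology

noncomputable def rightRiemannSum (f : ℝ → ℝ) (θ : ℝ) (N : ℕ) : ℝ :=
  (1 / (N : ℝ)) * ∑ j ∈ Icc 1 ⌊θ * N⌋₊, f (j / N)

lemma rightRiemannSum_eq_sum_range (f : ℝ → ℝ) (θ : ℝ) (N : ℕ) :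
    rightRiemannSum f θ N =
      (N : ℝ)⁻¹ * ∑ k ∈ range ⌊θ * N⌋₊, f ((k + 1) * (N : ℝ)⁻¹) := by
  rw [rightRiemannSum, one_div, ← Ico_add_one_right_eq_Icc, sum_Ico_eq_sum_range]
  simp [add_comm, div_eq_mul_inv]

lemma rightRiemannSum_add_of_eqOn {f g₁ g₂ : ℝ → ℝ} {θ : ℝ}
    (h : Set.EqOn f (g₁ + g₂) (Set.Ioc 0 θ)) :
    rightRiemannSum f θ = rightRiemannSum g₁ θ + rightRiemannSum g₂ θ := by
  ext N
  simp only [Pi.add_apply, rightRiemannSum, ← mul_add, ← sum_add_distrib]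
  congr 1
  refine sum_congr rfl fun j hj => h ?_
  obtain ⟨hj1, hjM⟩ := mem_Icc.1 hj
  have hjθ : (j : ℝ) ≤ θ * N := (Nat.le_floor_iff' (by omega)).1 hjM
  have hN : 0 < N := Nat.pos_of_ne_zero (by rintro rfl; simp at hjM; omega)
  exact ⟨by positivity, (div_le_iff₀ (by positivity)).2 hjθ⟩

lemma MonotoneOn.comp_mul_add_Icc {f : ℝ → ℝ} {a h : ℝ} {M : ℕ} (hh : 0 ≤ h)
    (hf : MonotoneOn f (Set.Icc a (a + M * h))) :
    MonotoneOn (fun x => f (h * x + a)) (Set.Icc 0 (0 + M)) :=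
  hf.comp (fun x _ y _ hxy => by gcongr) fun x hx => by
    constructor <;> nlinarith [hx.1, hx.2]

theorem MonotoneOn.mul_sum_le_integral {f : ℝ → ℝ} {a h : ℝ} {M : ℕ} (hh : 0 < h)
    (hf : MonotoneOn f (Set.Icc a (a + M * h))) :
    h * ∑ i ∈ range M, f (a + i * h) ≤ ∫ x in a..a + M * h, f x := by
  have := (hf.comp_mul_add_Icc hh.le).sum_le_integral
  rw [integral_comp_mul_add _ hh.ne', smul_eq_mul, le_inv_mul_iff₀ hh] at this
  simpa only [zero_add, mul_zero, zero_mul, add_zero, mul_comm h, add_comm _ a, Nat.cast_add,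
    Nat.cast_one] using this

theorem MonotoneOn.integral_le_mul_sum {f : ℝ → ℝ} {a h : ℝ} {M : ℕ} (hh : 0 < h)
    (hf : MonotoneOn f (Set.Icc a (a + M * h))) :
    ∫ x in a..a + M * h, f x ≤ h * ∑ i ∈ range M, f (a + (i + 1) * h) := by
  have := (hf.comp_mul_add_Icc hh.le).integral_le_sum
  rw [integral_comp_mul_add _ hh.ne', smul_eq_mul, inv_mul_le_iff₀ hh] at this
  simpa only [zero_add, mul_zero, zero_mul, add_zero, mul_comm h, add_comm _ a, Nat.cast_add,
    Nat.cast_one] using this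

theorem MonotoneOn.rightRiemannSum_mem_Icc {f : ℝ → ℝ} (hf : MonotoneOn f (Set.Ioi 0))
    (θ : ℝ) {N : ℕ} (hN : 0 < N) :
    rightRiemannSum f θ N ∈ Set.Icc
      ((∫ x in (N : ℝ)⁻¹..(⌊θ * N⌋₊ + 1) * (N : ℝ)⁻¹, f x)
        - (N : ℝ)⁻¹ * (f ((⌊θ * N⌋₊ + 1) * (N : ℝ)⁻¹) - f (N : ℝ)⁻¹))
      (∫ x in (N : ℝ)⁻¹..(⌊θ * N⌋₊ + 1) * (N : ℝ)⁻¹, f x) := by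
  set h : ℝ := (N : ℝ)⁻¹
  set M := ⌊θ * N⌋₊
  have hh : 0 < h := by positivity
  have hb : (M + 1) * h = h + M * h := by ring
  have hmono : MonotoneOn f (Set.Icc h (h + M * h)) := hf.mono fun x hx => hh.trans_le hx.1
  set g : ℕ → ℝ := fun i => f (h + i * h)
  have hsum : rightRiemannSum f θ N = h * ∑ i ∈ range M, g i := by
    rw [rightRiemannSum_eq_sum_range]
    congr! 3 with i
    ring
  have hshift : ∑ i ∈ range M, f (h + (i + 1) * h) = ∑ i ∈ range M, g i + (g M - g 0) := by
    have := sum_range_succ' g M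
    rw [sum_range_succ] at this
    push_cast [g] at this ⊢
    linarith
  have hlow := hmono.integral_le_mul_sum hh
  rw [hshift, mul_add] at hlow
  simp only [g, Nat.cast_zero, zero_mul, add_zero] at hlow
  rw [hsum, hb]
  exact ⟨by linarith, hmono.mul_sum_le_integral hh⟩

theorem tendsto_rightRiemannSum_log {θ : ℝ} (hθ : 0 < θ) :
    Tendsto (rightRiemannSum log θ) atTop (𝓝 (∫ t in 0..θ, log t)) := by
  set h : ℕ → ℝ := fun N => (N : ℝ)⁻¹
  set b : ℕ → ℝ := fun N => (⌊θ * N⌋₊ + 1) * h N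
  have hh : Tendsto h atTop (𝓝 0) := tendsto_inv_atTop_nhds_zero_nat
  have hb : Tendsto b atTop (𝓝 θ) := by
    have := ((tendsto_nat_floor_mul_div_atTop hθ.le).comp tendsto_natCast_atTop_atTop).add hh
    simpa [b, add_mul, div_eq_mul_inv] using this
  have hI : Tendsto (fun N => ∫ x in h N..b N, log x) atTop (𝓝 (∫ x in 0..θ, log x)) := by
    simp only [integral_log]
    exact ((((continuous_mul_log.tendsto θ).comp hb).sub
      ((continuous_mul_log.tendsto 0).comp hh)).sub hb).add hh
  have hgap : Tendsto (fun N => h N * (log (b N) - log (h N))) atTop (𝓝 0) := by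
    have := (hh.mul ((continuousAt_log hθ.ne').tendsto.comp hb)).sub
      ((continuous_mul_log.tendsto 0).comp hh)
    simpa [mul_sub] using this
  have hbounds := eventually_gt_atTop 0 |>.mono fun N hN =>
    strictMonoOn_log.monotoneOn.rightRiemannSum_mem_Icc θ hN
  exact tendsto_of_tendsto_of_tendsto_of_le_of_le' (by simpa only [sub_zero] using hI.sub hgap) hI
    (hbounds.mono fun _ hN => hN.1) (hbounds.mono fun _ hN => hN.2)

lemma abs_mul_sum_sub_integral_le {g : ℝ → ℝ} {h ε : ℝ} {M : ℕ} (hh : 0 ≤ h)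
    (hg : ContinuousOn g (Set.Icc 0 (M * h)))
    (hclose : ∀ k < M, ∀ t ∈ Set.Icc (k * h) ((k + 1) * h), |g ((k + 1) * h) - g t| ≤ ε) :
    |h * ∑ k ∈ range M, g ((k + 1) * h) - ∫ t in 0..M * h, g t| ≤ M * (ε * h) := by
  have hcell : ∀ k < M, IntervalIntegrable g volume (k * h) ((k + 1) * h) := by
    intro k hk
    have hkM : (k + 1 : ℝ) ≤ M := by exact_mod_cast hk
    refine ContinuousOn.intervalIntegrable
      (hg.mono (Set.uIcc_subset_Icc ⟨by positivity, ?_⟩ ⟨by positivity, ?_⟩))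
    all_goals gcongr
  have hsplit : ∫ t in 0..M * h, g t = ∑ k ∈ range M, ∫ t in k * h..(k + 1) * h, g t := by
    have := sum_integral_adjacent_intervals (a := fun k : ℕ => k * h) (n := M)
      (by push_cast; exact hcell)
    push_cast at this
    simpa using this.symm
  have hcellbound :
      ∀ k < M, |h * g ((k + 1) * h) - ∫ t in k * h..(k + 1) * h, g t| ≤ ε * h := by
    intro k hk
    have hlen : (k + 1) * h - k * h = h := by ring
    calc |h * g ((k + 1) * h) - ∫ t in k * h..(k + 1) * h, g t|
        = ‖∫ t in k * h..(k + 1) * h, (g ((k + 1) * h) - g t)‖ := by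
          rw [integral_sub intervalIntegrable_const (hcell k hk), intervalIntegral.integral_const,
            hlen, smul_eq_mul, Real.norm_eq_abs]
      _ ≤ ε * |(k + 1) * h - k * h| := by
          refine norm_integral_le_of_norm_le_const fun t ht => hclose k hk t ?_
          rw [Set.uIoc_of_le (by nlinarith)] at ht
          exact Set.Ioc_subset_Icc_self ht
      _ = ε * h := by rw [hlen, abs_of_nonneg hh]
  calc |h * ∑ k ∈ range M, g ((k + 1) * h) - ∫ t in 0..M * h, g t|
      = |∑ k ∈ range M, (h * g ((k + 1) * h) - ∫ t in k * h..(k + 1) * h, g t)| := by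
        rw [hsplit, mul_sum, sum_sub_distrib]
    _ ≤ ∑ k ∈ range M, |h * g ((k + 1) * h) - ∫ t in k * h..(k + 1) * h, g t| :=
        abs_sum_le_sum_abs _ _
    _ ≤ ∑ _k ∈ range M, ε * h := sum_le_sum fun k hk => hcellbound k (mem_range.1 hk)
    _ = M * (ε * h) := by simp

theorem tendsto_rightRiemannSum_of_continuousOn {g : ℝ → ℝ} {θ : ℝ} (hθ : 0 ≤ θ)
    (hg : ContinuousOn g (Set.Icc 0 θ)) :
    Tendsto (rightRiemannSum g θ) atTop (𝓝 (∫ t in 0..θ, g t)) := by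
  set u : ℕ → ℝ := fun N => ⌊θ * N⌋₊ * (N : ℝ)⁻¹
  have hu_mem : ∀ N, u N ∈ Set.Icc 0 θ := fun N =>
    ⟨by positivity, by
      rw [show u N = _ from (div_eq_mul_inv _ _).symm]
      exact div_le_of_le_mul₀ (by positivity) hθ (Nat.floor_le (by positivity))⟩
  have hu : Tendsto u atTop (𝓝 θ) := by
    simpa [u, div_eq_mul_inv, Function.comp_def] using
      (tendsto_nat_floor_mul_div_atTop hθ).comp tendsto_natCast_atTop_atTop
  have hprim : Tendsto (fun N => ∫ t in 0..u N, g t) atTop (𝓝 (∫ t in 0..θ, g t)) := by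
    have hc := continuousOn_primitive_interval (a := 0) (b := θ) (μ := volume)
      (by rw [Set.uIcc_of_le hθ]; exact hg.integrableOn_Icc)
    rw [Set.uIcc_of_le hθ] at hc
    exact (hc θ ⟨hθ, le_rfl⟩).tendsto.comp
      (tendsto_nhdsWithin_iff.2 ⟨hu, Eventually.of_forall hu_mem⟩)
  have herr : Tendsto (fun N => rightRiemannSum g θ N - ∫ t in 0..u N, g t) atTop (𝓝 0) := by
    rw [Metric.tendsto_nhds]
    intro ε hε
    obtain ⟨δ, hδ, hgδ⟩ := Metric.uniformContinuousOn_iff_le.1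
      (isCompact_Icc.uniformContinuousOn_of_continuous hg) (ε / (θ + 1)) (by positivity)
    filter_upwards [tendsto_inv_atTop_nhds_zero_nat.eventually (eventually_le_nhds hδ)] with N hN
    rw [Real.dist_0_eq_abs, rightRiemannSum_eq_sum_range]
    calc _ ≤ ⌊θ * N⌋₊ * (ε / (θ + 1) * (N : ℝ)⁻¹) := by
          refine abs_mul_sum_sub_integral_le (by positivity)
            (hg.mono (Set.Icc_subset_Icc le_rfl (hu_mem N).2)) fun k hk t ht => ?_
          have hk1 : ((k : ℝ) + 1) * (N : ℝ)⁻¹ ≤ θ :=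
            (mul_le_mul_of_nonneg_right (by exact_mod_cast hk) (by positivity)).trans (hu_mem N).2
          rw [← Real.dist_eq]
          have hk0 : (0 : ℝ) ≤ k * (N : ℝ)⁻¹ := by positivity
          refine hgδ _ ⟨by positivity, hk1⟩ t ⟨hk0.trans ht.1, ht.2.trans hk1⟩ ?_
          rw [Real.dist_eq, abs_of_nonneg (by linarith [ht.2])]
          linarith [ht.1]
      _ = ε / (θ + 1) * u N := by ring
      _ ≤ ε / (θ + 1) * θ := by gcongr; exact (hu_mem N).2
      _ < ε := by
          rw [div_mul_eq_mul_div, div_lt_iff₀ (by positivity)]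
          nlinarith
  simpa using herr.add hprim

lemma Real.sinc_pos_of_abs_lt_pi {x : ℝ} (hx : |x| < π) : 0 < sinc x := by
  rcases eq_or_ne x 0 with rfl | hx0
  · simp [sinc_zero]
  have habs : sinc x = sinc |x| := by
    rcases abs_choice x with h | h <;> rw [h]
    rw [sinc_neg]
  rw [habs, sinc_of_ne_zero (abs_ne_zero.2 hx0)]
  exact div_pos (sin_pos_of_pos_of_lt_pi (abs_pos.2 hx0) hx) (abs_pos.2 hx0)

lemma log_two_mul_sin_pi_mul {t : ℝ} (ht₀ : 0 < t) (ht₁ : t < 1) :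
    log (2 * sin (π * t)) = log t + log (2 * π * sinc (π * t)) := by
  have hs : 0 < sinc (π * t) :=
    sinc_pos_of_abs_lt_pi (by rw [abs_of_pos (by positivity)]; nlinarith [pi_pos])
  rw [← log_mul ht₀.ne' (by positivity), sinc_of_ne_zero (by positivity)]
  congr 1
  field_simp

lemma continuousOn_log_two_pi_mul_sinc :
    ContinuousOn (fun t => log (2 * π * sinc (π * t))) (Set.Ioo (-1) 1) := by
  refine (Continuous.continuousOn (by fun_prop)).log fun t ht => ?_
  have hπt : |π * t| < π := by
    rw [abs_mul, abs_of_pos pi_pos]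
    exact mul_lt_of_lt_one_right pi_pos (abs_lt.2 ht)
  have := sinc_pos_of_abs_lt_pi hπt
  positivity

/-- For every `0 < θ < 1`,
`lim_{N→∞} (1/N) Σ_{j=1}^{⌊θN⌋} log(2 sin(πj/N)) = ∫_0^θ log(2 sin(πt)) dt`. -/
theorem stmt3 (θ : ℝ) (h0 : 0 < θ) (h1 : θ < 1) :
    Filter.Tendsto
      (fun N : ℕ => (1 / (N : ℝ)) *
        ∑ j ∈ Finset.Icc 1 ⌊θ * (N : ℝ)⌋₊, Real.log (2 * Real.sin (Real.pi * j / N)))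
      Filter.atTop
      (nhds (∫ t in (0 : ℝ)..θ, Real.log (2 * Real.sin (Real.pi * t)))) := by
  set g : ℝ → ℝ := fun t => log (2 * π * sinc (π * t))
  have hsplit : Set.EqOn (fun t => log (2 * sin (π * t))) (log + g) (Set.Ioc 0 θ) :=
    fun t ht => log_two_mul_sin_pi_mul ht.1 (ht.2.trans_lt h1)
  have hg : ContinuousOn g (Set.Icc 0 θ) :=
    continuousOn_log_two_pi_mul_sinc.mono fun t ht => ⟨by linarith [ht.1], ht.2.trans_lt h1⟩
  have hint :
      ∫ t in 0..θ, log (2 * sin (π * t)) = (∫ t in 0..θ, log t) + ∫ t in 0..θ, g t := by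
    rw [← integral_add intervalIntegrable_log' (hg.intervalIntegrable_of_Icc h0.le)]
    exact integral_congr_ae (Eventually.of_forall fun t ht =>
      hsplit (by rwa [Set.uIoc_of_le h0.le] at ht))
  simp_rw [mul_div_assoc]
  change Tendsto (rightRiemannSum (fun t => log (2 * sin (π * t))) θ) _ _
  rw [rightRiemannSum_add_of_eqOn hsplit, hint]
  exact (tendsto_rightRiemannSum_log h0).add (tendsto_rightRiemannSum_of_continuousOn h0.le hg)
end

section
/- Let F(θ) = ∫_0^θ log(2·sin(πt)) dt for θ ∈ [0,1]. Then F attains its maximum on [0,1] at θ = 5/6; that is, F(θ) ≤ F(5/6) for all θ ∈ [0,1], with equality only at θ = 5/6. -/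
/-!
The derivative of `F` is `log (2 sin (π t))`, which is `≤ 0` on `[0, 1/6]`, positive on
`(1/6, 5/6)` and negative on `(5/6, 1)`, because `sin (π t) = 1/2` exactly at `t = 1/6, 5/6`.
So every value of `F` is below `max (F 0) (F (5/6))`, strictly unless `θ = 5/6`. Finally
`F 0 = 0 = F 1 < F (5/6)`, where `F 1 = 0` is the classical `∫₀^π log (sin x) dx = -π log 2`.
-/

open Real MeasureTheory intervalIntegral Set

noncomputable def logTwoSinPi (t : ℝ) : ℝ := log (2 * sin (π * t))

lemma logTwoSinPi_one_sub (t : ℝ) : logTwoSinPi (1 - t) = logTwoSinPi t := by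
  rw [logTwoSinPi, logTwoSinPi, mul_one_sub, sin_pi_sub]

lemma intervalIntegrable_logTwoSinPi (a b : ℝ) : IntervalIntegrable logTwoSinPi volume a b :=
  (show AnalyticOnNhd ℝ (fun t ↦ 2 * sin (π * t)) _ from fun _ _ ↦ by fun_prop)
    |>.meromorphicOn.intervalIntegrable_log

lemma integral_log_two_mul_sin_zero_pi : ∫ x in 0..π, log (2 * sin x) = 0 := by
  have hsplit : ∫ x in 0..π, log (2 * sin x) = ∫ x in 0..π, (log 2 + log (sin x)) := by
    refine integral_congr_uIoo fun x hx ↦ ?_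
    rw [uIoo_of_le pi_pos.le] at hx
    exact log_mul two_ne_zero (sin_pos_of_pos_of_lt_pi hx.1 hx.2).ne'
  rw [hsplit, intervalIntegral.integral_add (g := fun x ↦ log (sin x)) intervalIntegrable_const
    intervalIntegrable_log_sin, intervalIntegral.integral_const, integral_log_sin_zero_pi,
    smul_eq_mul]
  ring

lemma integral_logTwoSinPi_zero_one : ∫ t in 0..1, logTwoSinPi t = 0 := by
  simp only [logTwoSinPi]
  rw [integral_comp_mul_left (fun x ↦ log (2 * sin x)) pi_ne_zero, mul_zero, mul_one,
    integral_log_two_mul_sin_zero_pi, smul_zero]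

lemma strictMonoOn_sin_pi_mul : StrictMonoOn (fun t ↦ sin (π * t)) (Icc (-(1 / 2)) (1 / 2)) :=
  strictMonoOn_sin.comp ((strictMono_mul_left_of_pos pi_pos).strictMonoOn _) fun _ ht ↦
    ⟨by nlinarith [pi_pos, ht.1], by nlinarith [pi_pos, ht.2]⟩

lemma sin_pi_mul_one_div_six : sin (π * (1 / 6)) = 1 / 2 := by
  rw [← sin_pi_div_six]
  ring_nf

lemma logTwoSinPi_nonpos {t : ℝ} (h₀ : 0 ≤ t) (h₁ : t ≤ 1 / 6) : logTwoSinPi t ≤ 0 := by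
  have hsin_nonneg : 0 ≤ sin (π * t) :=
    sin_nonneg_of_nonneg_of_le_pi (by positivity) (by nlinarith [pi_pos])
  have hsin_le : sin (π * t) ≤ sin (π * (1 / 6)) :=
    strictMonoOn_sin_pi_mul.monotoneOn ⟨by linarith, by linarith⟩ (by norm_num) h₁
  rw [sin_pi_mul_one_div_six] at hsin_le
  exact log_nonpos (by positivity) (by linarith)

lemma logTwoSinPi_pos {t : ℝ} (h₀ : 1 / 6 < t) (h₁ : t < 5 / 6) : 0 < logTwoSinPi t := by
  wlog ht : t ≤ 1 / 2 generalizing t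
  · rw [← logTwoSinPi_one_sub]
    exact this (by linarith) (by linarith) (by linarith)
  have hsin : sin (π * (1 / 6)) < sin (π * t) :=
    strictMonoOn_sin_pi_mul (by norm_num) ⟨by linarith, ht⟩ h₀
  rw [sin_pi_mul_one_div_six] at hsin
  exact log_pos (by linarith)

lemma logTwoSinPi_neg {t : ℝ} (h₀ : 5 / 6 < t) (h₁ : t < 1) : logTwoSinPi t < 0 := by
  rw [← logTwoSinPi_one_sub]
  have hsin_pos : 0 < sin (π * (1 - t)) :=
    sin_pos_of_pos_of_lt_pi (by nlinarith [pi_pos]) (by nlinarith [pi_pos])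
  have hsin_lt : sin (π * (1 - t)) < sin (π * (1 / 6)) :=
    strictMonoOn_sin_pi_mul ⟨by linarith, by linarith⟩ (by norm_num) (by linarith)
  rw [sin_pi_mul_one_div_six] at hsin_lt
  exact log_neg (by positivity) (by linarith)

lemma integral_logTwoSinPi_sub (a b : ℝ) :
    (∫ t in 0..b, logTwoSinPi t) - ∫ t in 0..a, logTwoSinPi t = ∫ t in a..b, logTwoSinPi t :=
  integral_interval_sub_left (intervalIntegrable_logTwoSinPi _ _)
    (intervalIntegrable_logTwoSinPi _ _)

lemma integral_logTwoSinPi_lt_of_pos_on {a b : ℝ} (hab : a < b)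
    (hpos : ∀ t ∈ Ioo a b, 0 < logTwoSinPi t) :
    ∫ t in 0..a, logTwoSinPi t < ∫ t in 0..b, logTwoSinPi t := by
  have := intervalIntegral_pos_of_pos_on (intervalIntegrable_logTwoSinPi a b) hpos hab
  rw [← integral_logTwoSinPi_sub] at this
  linarith

lemma integral_logTwoSinPi_lt_of_neg_on {a b : ℝ} (hab : a < b)
    (hneg : ∀ t ∈ Ioo a b, logTwoSinPi t < 0) :
    ∫ t in 0..b, logTwoSinPi t < ∫ t in 0..a, logTwoSinPi t := by
  have := intervalIntegral_pos_of_pos_on (f := fun t ↦ -logTwoSinPi t)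
    (intervalIntegrable_logTwoSinPi a b).neg (fun t ht ↦ neg_pos.2 (hneg t ht)) hab
  rw [intervalIntegral.integral_neg, ← integral_logTwoSinPi_sub] at this
  linarith

lemma integral_logTwoSinPi_lt_of_ne {θ : ℝ} (h₀ : 0 ≤ θ) (h₁ : θ ≤ 1)
    (hθ : θ ≠ 5 / 6) :
    ∫ t in 0..θ, logTwoSinPi t < ∫ t in 0..5 / 6, logTwoSinPi t := by
  rcases lt_or_gt_of_ne hθ with hlt | hgt
  · rcases le_or_gt θ (1 / 6) with hsmall | hmid
    · have hnonpos : ∫ t in 0..θ, logTwoSinPi t ≤ 0 := by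
        simpa using intervalIntegral.integral_nonneg h₀ fun t ht ↦
          neg_nonneg.2 (logTwoSinPi_nonpos ht.1 (ht.2.trans hsmall))
      have hend : ∫ t in 0..1, logTwoSinPi t < ∫ t in 0..5 / 6, logTwoSinPi t :=
        integral_logTwoSinPi_lt_of_neg_on (by norm_num) fun t ht ↦ logTwoSinPi_neg ht.1 ht.2
      rw [integral_logTwoSinPi_zero_one] at hend
      linarith
    · exact integral_logTwoSinPi_lt_of_pos_on hlt fun t ht ↦
        logTwoSinPi_pos (hmid.trans ht.1) ht.2
  · exact integral_logTwoSinPi_lt_of_neg_on hgt fun t ht ↦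
      logTwoSinPi_neg ht.1 (ht.2.trans_le h₁)

/-- The function `F(θ) = ∫_0^θ log(2 sin(πt)) dt` attains its
maximum on `[0,1]` at `θ = 5/6`, and only there. -/
theorem stmt4 (F : ℝ → ℝ)
    (hF : ∀ θ : ℝ, F θ = ∫ t in (0 : ℝ)..θ, Real.log (2 * Real.sin (Real.pi * t))) :
    ∀ θ : ℝ, 0 ≤ θ → θ ≤ 1 →
      F θ ≤ F (5 / 6) ∧ (F θ = F (5 / 6) → θ = 5 / 6) := by
  intro θ h₀ h₁
  rcases eq_or_ne θ (5 / 6) with rfl | hθ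
  · exact ⟨le_rfl, fun _ ↦ rfl⟩
  have hlt : F θ < F (5 / 6) := by
    rw [hF, hF]
    exact integral_logTwoSinPi_lt_of_ne h₀ h₁ hθ
  exact ⟨hlt.le, fun heq ↦ absurd heq hlt.ne⟩
end

section
/- ∫_0^{5/6} log(2·sin(πt)) dt = (1/(2π)) · Σ_{n=1}^{∞} sin(nπ/3)/n². Equivalently, 4π·F(5/6) equals the hyperbolic volume Vol(S³\4₁) = 2·Im Li₂(e^{iπ/3}) = 2·Σ_{n=1}^{∞} sin(nπ/3)/n² of the figure-eight knot complement. -/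
/-! For `|r| < 1` the Taylor series of `log (1 - z)` gives
`log ‖1 - r e^{2πit}‖ = -∑ rⁿ cos (2πnt) / n`, uniformly in `t`, so integrating termwise
`∫₀^θ log ‖1 - r e^{2πit}‖ dt = -(2π)⁻¹ ∑ sin (2πnθ) rⁿ / n²`. Let `r → 1⁻`. On the left,
`‖1 - r e^{2πit}‖² = (1 - r)² + 4r sin² (πt)` is at least `sin² (πt)` and at most `4`, so the
integrable function `log 2 - log |sin (πt)|` dominates and the integrals tend to
`∫₀^θ log (2 sin (πt)) dt`; on the right, Abel's theorem applies since `∑ sin (2πnθ) / n²`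
converges. At `θ = 5/6` one has `sin (5πn/3) = -sin (nπ/3)`. -/
open Real MeasureTheory Filter Set Topology

lemma norm_one_sub_mul_exp_sq (r t : ℝ) :
    ‖1 - r * Complex.exp (↑(2 * π * t) * Complex.I)‖ ^ 2
      = (1 - r) ^ 2 + 4 * r * sin (π * t) ^ 2 := by
  rw [Complex.sq_norm, Complex.normSq_apply]
  simp only [Complex.sub_re, Complex.sub_im, Complex.mul_re, Complex.mul_im,
    Complex.exp_ofReal_mul_I_re, Complex.exp_ofReal_mul_I_im,
    Complex.ofReal_re, Complex.ofReal_im, Complex.one_re, Complex.one_im]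
  rw [show 2 * π * t = 2 * (π * t) by ring, cos_two_mul, sin_two_mul]
  linear_combination (4 * r ^ 2 * cos (π * t) ^ 2 - 4 * r) * sin_sq_add_cos_sq (π * t)

lemma abs_sin_pi_mul_le_norm_one_sub_mul_exp {r : ℝ} (hr : 1 / 4 ≤ r) (t : ℝ) :
    |sin (π * t)| ≤ ‖1 - r * Complex.exp (↑(2 * π * t) * Complex.I)‖ := by
  rw [← sq_le_sq₀ (abs_nonneg _) (norm_nonneg _), sq_abs, norm_one_sub_mul_exp_sq]
  nlinarith [sq_nonneg (1 - r), sq_nonneg (sin (π * t))]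

lemma norm_one_sub_mul_exp_le_two {r : ℝ} (hr : |r| ≤ 1) (t : ℝ) :
    ‖1 - r * Complex.exp (↑(2 * π * t) * Complex.I)‖ ≤ 2 := by
  calc _ ≤ ‖(1 : ℂ)‖ + ‖r * Complex.exp (↑(2 * π * t) * Complex.I)‖ := norm_sub_le _ _
    _ ≤ 2 := by
      rw [norm_one, norm_mul, Complex.norm_exp_ofReal_mul_I, Complex.norm_real, norm_eq_abs]
      linarith

lemma norm_one_sub_exp (t : ℝ) :
    ‖1 - Complex.exp (↑(2 * π * t) * Complex.I)‖ = 2 * |sin (π * t)| := by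
  rw [← sq_eq_sq₀ (norm_nonneg _) (by positivity), mul_pow, sq_abs]
  have h := norm_one_sub_mul_exp_sq 1 t
  norm_num at h ⊢
  linarith

lemma hasSum_log_norm_one_sub_mul_exp {r : ℝ} (hr : |r| < 1) (t : ℝ) :
    HasSum (fun n : ℕ => -(r ^ n * cos (2 * π * n * t) / n))
      (log ‖1 - r * Complex.exp (↑(2 * π * t) * Complex.I)‖) := by
  set z : ℂ := r * Complex.exp (↑(2 * π * t) * Complex.I)
  have hz : ‖z‖ < 1 := by
    rwa [norm_mul, Complex.norm_exp_ofReal_mul_I, Complex.norm_real, norm_eq_abs, mul_one]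
  have hre : ∀ n : ℕ, (z ^ n / n).re = r ^ n * cos (2 * π * n * t) / n := by
    intro n
    rw [mul_pow, ← Complex.exp_nat_mul, show (n : ℂ) * (↑(2 * π * t) * Complex.I)
      = ↑(2 * π * n * t) * Complex.I by push_cast; ring, ← Complex.ofReal_pow,
      ← Complex.ofReal_natCast, mul_div_right_comm, ← Complex.ofReal_div,
      Complex.re_ofReal_mul, Complex.exp_ofReal_mul_I_re]
    ring
  have h := (Complex.hasSum_re (Complex.hasSum_taylorSeries_neg_log hz)).neg
  simp only [hre, Complex.neg_re, Complex.log_re, neg_neg] at h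
  exact h

lemma integral_cos_two_pi_nat_mul_div (n : ℕ) (θ : ℝ) :
    ∫ t in (0 : ℝ)..θ, cos (2 * π * n * t) / n = sin (2 * π * n * θ) / (2 * π * n ^ 2) := by
  rcases eq_or_ne n 0 with rfl | hn
  · simp
  have hc : 2 * π * n ≠ 0 := by positivity
  rw [intervalIntegral.integral_div, intervalIntegral.integral_comp_mul_left (fun x => cos x) hc,
    integral_cos, mul_zero, sin_zero, sub_zero, smul_eq_mul]
  field_simp

lemma norm_pow_mul_cos_div_nat_le (r x : ℝ) (n : ℕ) : ‖r ^ n * cos x / n‖ ≤ |r| ^ n := by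
  rcases eq_or_ne n 0 with rfl | hn
  · simp
  have hn1 : (1 : ℝ) ≤ n := Nat.one_le_cast.mpr (Nat.one_le_iff_ne_zero.mpr hn)
  rw [norm_div, norm_mul, norm_pow, Real.norm_natCast, div_le_iff₀ (by positivity)]
  calc ‖r‖ ^ n * ‖cos x‖ ≤ |r| ^ n * 1 := by
        gcongr
        · exact le_of_eq (norm_eq_abs r)
        · exact abs_cos_le_one x
    _ ≤ |r| ^ n * n := by gcongr

lemma integral_log_norm_one_sub_mul_exp {r : ℝ} (hr : |r| < 1) (θ : ℝ) :
    ∫ t in (0 : ℝ)..θ, log ‖1 - r * Complex.exp (↑(2 * π * t) * Complex.I)‖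
      = -(2 * π)⁻¹ * ∑' n : ℕ, sin (2 * π * n * θ) / n ^ 2 * r ^ n := by
  have hsum := intervalIntegral.hasSum_integral_of_dominated_convergence (μ := volume)
    (F := fun (n : ℕ) t => -(r ^ n * cos (2 * π * n * t) / n)) (fun n _ => |r| ^ n)
    (fun n => (by fun_prop : Continuous _).aestronglyMeasurable)
    (fun n => ae_of_all _ fun t _ => by simpa using norm_pow_mul_cos_div_nat_le r _ n)
    (ae_of_all _ fun _ _ => summable_geometric_of_lt_one (abs_nonneg r) hr)
    intervalIntegrable_const (ae_of_all _ fun t _ => hasSum_log_norm_one_sub_mul_exp hr t)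
    (a := 0) (b := θ)
  rw [← hsum.tsum_eq, ← tsum_mul_left]
  refine tsum_congr fun n => ?_
  simp_rw [mul_div_assoc, intervalIntegral.integral_neg, intervalIntegral.integral_const_mul,
    integral_cos_two_pi_nat_mul_div]
  field_simp

lemma ae_sin_pi_mul_ne_zero : ∀ᵐ t : ℝ, sin (π * t) ≠ 0 := by
  refine ((Set.countable_range ((↑) : ℤ → ℝ)).ae_notMem volume).mono fun t ht hsin => ht ?_
  obtain ⟨n, hn⟩ := sin_eq_zero_iff.mp hsin
  exact ⟨n, mul_left_cancel₀ pi_ne_zero (by linarith)⟩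

lemma abs_log_le_log_two_sub_log {s y : ℝ} (hs : 0 < s) (hs1 : s ≤ 1) (hsy : s ≤ y)
    (hy : y ≤ 2) :
    |log y| ≤ log 2 - log s := by
  have hlog_s : log s ≤ 0 := log_nonpos hs.le hs1
  have hlog_2 : 0 ≤ log 2 := log_nonneg one_le_two
  rw [abs_le]
  constructor
  · linarith [log_le_log hs hsy]
  · linarith [log_le_log (hs.trans_le hsy) hy]

lemma tendsto_integral_log_norm_one_sub_mul_exp (θ : ℝ) :
    Tendsto
      (fun r : ℝ => ∫ t in (0 : ℝ)..θ, log ‖1 - r * Complex.exp (↑(2 * π * t) * Complex.I)‖)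
      (𝓝[<] 1) (𝓝 (∫ t in (0 : ℝ)..θ, log (2 * sin (π * t)))) := by
  have hr : ∀ᶠ r in 𝓝[<] (1 : ℝ), r ∈ Ioo (1 / 4) 1 := Ioo_mem_nhdsLT (by norm_num)
  refine intervalIntegral.tendsto_integral_filter_of_dominated_convergence
    (fun t => log 2 - log (sin (π * t))) (Eventually.of_forall fun r => ?_) ?_ ?_ ?_
  · exact (by fun_prop : Continuous fun t : ℝ =>
      ‖1 - r * Complex.exp (↑(2 * π * t) * Complex.I)‖).measurable.log.aestronglyMeasurable
  · filter_upwards [hr] with r ⟨hr0, hr1⟩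
    filter_upwards [ae_sin_pi_mul_ne_zero] with t ht _
    rw [norm_eq_abs, ← log_abs (sin _)]
    exact abs_log_le_log_two_sub_log (abs_pos.mpr ht) (abs_sin_le_one _)
      (abs_sin_pi_mul_le_norm_one_sub_mul_exp hr0.le t)
      (norm_one_sub_mul_exp_le_two (by rw [abs_of_pos (by linarith)]; exact hr1.le) t)
  · have h := (intervalIntegrable_log_sin (a := 0) (b := π * θ)).comp_mul_left (c := π)
    simp only [zero_div, mul_div_cancel_left₀ _ pi_ne_zero, Function.comp_apply] at h
    exact intervalIntegrable_const.sub h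
  · filter_upwards [ae_sin_pi_mul_ne_zero] with t ht _
    have hlim : ‖1 - ((1 : ℝ) : ℂ) * Complex.exp (↑(2 * π * t) * Complex.I)‖
        = |2 * sin (π * t)| := by
      rw [Complex.ofReal_one, one_mul, norm_one_sub_exp, abs_mul, abs_two]
    have hcont : ContinuousAt
        (fun r : ℝ => log ‖1 - r * Complex.exp (↑(2 * π * t) * Complex.I)‖) 1 :=
      (by fun_prop : Continuous _).continuousAt.log (by rw [hlim]; positivity)
    have h := hcont.tendsto.mono_left (nhdsWithin_le_nhds (s := Iio 1))
    rwa [hlim, log_abs] at h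

lemma summable_sin_two_pi_nat_mul_div_sq (θ : ℝ) :
    Summable fun n : ℕ => sin (2 * π * n * θ) / n ^ 2 := by
  refine Summable.of_norm_bounded (Real.summable_one_div_nat_pow.mpr one_lt_two) fun n => ?_
  rw [norm_div, norm_pow, Real.norm_natCast, norm_eq_abs]
  gcongr
  exact abs_sin_le_one _

-- Valid for every real `θ`: `Real.log` is even, so the integrand is `log |2 sin (πt)|`.
theorem integral_log_two_mul_sin_pi_mul (θ : ℝ) :
    ∫ t in (0 : ℝ)..θ, log (2 * sin (π * t))
      = -(2 * π)⁻¹ * ∑' n : ℕ, sin (2 * π * n * θ) / n ^ 2 := by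
  have habel := (Real.tendsto_tsum_powerSeries_nhdsWithin_lt
    (summable_sin_two_pi_nat_mul_div_sq θ).hasSum.tendsto_sum_nat).const_mul (-(2 * π)⁻¹)
  refine tendsto_nhds_unique ((tendsto_integral_log_norm_one_sub_mul_exp θ).congr' ?_) habel
  filter_upwards [Ioo_mem_nhdsLT (show (-1 : ℝ) < 1 by norm_num)] with r hr
  exact integral_log_norm_one_sub_mul_exp (abs_lt.mpr hr) θ

/-- `∫_0^{5/6} log(2 sin(πt)) dt = (1/(2π)) Σ_{n≥1} sin(nπ/3)/n²`;
equivalently, `4π F(5/6)` equals the hyperbolic volume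
`Vol(S³∖4₁) = 2 Im Li₂(e^{iπ/3}) = 2 Σ_{n≥1} sin(nπ/3)/n²` of the figure-eight
knot complement. -/
theorem stmt5 :
    (∫ t in (0 : ℝ)..(5 / 6 : ℝ), Real.log (2 * Real.sin (Real.pi * t)))
      = (1 / (2 * Real.pi)) *
          ∑' n : ℕ, Real.sin (((n : ℝ) + 1) * Real.pi / 3) / ((n : ℝ) + 1) ^ 2 ∧
    4 * Real.pi * (∫ t in (0 : ℝ)..(5 / 6 : ℝ), Real.log (2 * Real.sin (Real.pi * t)))
      = 2 * ∑' n : ℕ, Real.sin (((n : ℝ) + 1) * Real.pi / 3) / ((n : ℝ) + 1) ^ 2 := by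
  have hterm : ∀ n : ℕ, sin (2 * π * (n + 1 : ℕ) * (5 / 6)) / (n + 1 : ℕ) ^ 2
      = -(sin ((n + 1) * π / 3) / (n + 1) ^ 2) := by
    intro n
    rw [show 2 * π * (n + 1 : ℕ) * (5 / 6) = (n + 1 : ℕ) * (2 * π) - (n + 1) * π / 3 by
      push_cast; ring, sin_nat_mul_two_pi_sub]
    push_cast
    ring
  have hF : ∫ t in (0 : ℝ)..5 / 6, log (2 * sin (π * t))
      = (1 / (2 * π)) * ∑' n : ℕ, sin ((n + 1) * π / 3) / (n + 1) ^ 2 := by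
    rw [integral_log_two_mul_sin_pi_mul, (summable_sin_two_pi_nat_mul_div_sq _).tsum_eq_zero_add]
    simp only [hterm, tsum_neg]
    simp
  refine ⟨hF, ?_⟩
  rw [hF]
  field_simp
  ring
end

section
/- Let N ≥ 2 and for 0 ≤ m ≤ N−1 set a_m = ∏_{j=1}^{m} 4·sin²(πj/N). Then lim_{N→∞} (1/N) · log( max_{0 ≤ m ≤ N−1} a_m ) = 2·∫_0^{5/6} log(2·sin(πt)) dt. -/
/-!
Write `L t = log (2 sin πt)`, so that `log a_m = 2 ∑_{j ≤ m} L (j / N)`. The function `L` is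
concave on `(0, 1)`, so the Hermite–Hadamard inequalities compare each term `L (j / N)` with the
integral of `L` over a cell of length `1 / N`: the midpoint bound gives
`∑_{j ≤ m} L (j / N) ≥ N ∫_{1/(2N)}^{(m+1/2)/N} L`, the trapezoid bound gives
`∑_{j ≤ m} L (j / N) ≤ N ∫_{1/N}^{m/N} L + log 2`.
Since `L ≤ 0` outside `[1/6, 5/6]`, `L ≥ 0` inside, and `∫_0^1 L = 0`, the primitive `∫_0^x L`
is maximal on `[0, 1]` at `x = 5/6`; choosing `m = ⌊5N/6⌋` in the lower bound matches the upper one.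
-/

open Real Finset Filter MeasureTheory

section HermiteHadamard

variable {f : ℝ → ℝ} {a b : ℝ}

lemma IntervalIntegrable.comp_add_sub (hf : IntervalIntegrable f volume a b) :
    IntervalIntegrable (fun x ↦ f (a + b - x)) volume a b := by
  simpa using (hf.comp_sub_left (a + b)).symm

theorem integral_add_comp_add_sub (hf : IntervalIntegrable f volume a b) :
    ∫ x in a..b, (f x + f (a + b - x)) = 2 * ∫ x in a..b, f x := by
  rw [intervalIntegral.integral_add hf hf.comp_add_sub, intervalIntegral.integral_comp_sub_left,
    add_sub_cancel_right, add_sub_cancel_left, two_mul]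

lemma intervalIntegral.integral_nonpos (hab : a ≤ b) (hf : ∀ x ∈ Set.Icc a b, f x ≤ 0) :
    ∫ x in a..b, f x ≤ 0 := by
  simpa using intervalIntegral.integral_nonneg hab fun x hx ↦ neg_nonneg.2 (hf x hx)

lemma add_sub_mem_Icc {x : ℝ} (hx : x ∈ Set.Icc a b) : a + b - x ∈ Set.Icc a b :=
  ⟨by linarith [hx.2], by linarith [hx.1]⟩

theorem ConcaveOn.integral_le_sub_mul_midpoint (hf : ConcaveOn ℝ (Set.Icc a b) f) (hab : a ≤ b)
    (hfi : IntervalIntegrable f volume a b) :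
    ∫ x in a..b, f x ≤ (b - a) * f ((a + b) / 2) := by
  have hmid : ∀ x ∈ Set.Icc a b, f x + f (a + b - x) ≤ 2 * f ((a + b) / 2) := fun x hx ↦ by
    have h := hf.2 hx (add_sub_mem_Icc hx) (by norm_num : (0 : ℝ) ≤ 1 / 2)
      (by norm_num : (0 : ℝ) ≤ 1 / 2) (by norm_num)
    simp only [smul_eq_mul] at h
    rw [show 1 / 2 * x + 1 / 2 * (a + b - x) = (a + b) / 2 by ring] at h
    linarith
  have h := intervalIntegral.integral_mono_on hab
    (hfi.add hfi.comp_add_sub) intervalIntegrable_const hmid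
  rw [integral_add_comp_add_sub hfi, intervalIntegral.integral_const, smul_eq_mul] at h
  linarith

theorem ConcaveOn.sub_mul_average_le_integral (hf : ConcaveOn ℝ (Set.Icc a b) f) (hab : a ≤ b)
    (hfi : IntervalIntegrable f volume a b) :
    (b - a) * ((f a + f b) / 2) ≤ ∫ x in a..b, f x := by
  have hchord : ∀ x ∈ Set.Icc a b, f a + f b ≤ f x + f (a + b - x) := fun x hx ↦ by
    rcases hab.eq_or_lt with rfl | hlt
    · obtain rfl : x = a := le_antisymm hx.2 hx.1
      simp
    have hba : 0 < b - a := sub_pos.2 hlt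
    obtain ⟨t, ht₀, ht₁, rfl⟩ : ∃ t : ℝ, 0 ≤ t ∧ t ≤ 1 ∧ x = (1 - t) * a + t * b :=
      ⟨(x - a) / (b - a), div_nonneg (by linarith [hx.1]) hba.le,
        div_le_one_of_le₀ (by linarith [hx.2]) hba.le, by field_simp; ring⟩
    have h₁ := hf.2 (Set.left_mem_Icc.2 hab) (Set.right_mem_Icc.2 hab) (sub_nonneg.2 ht₁) ht₀
      (sub_add_cancel 1 t)
    have h₂ := hf.2 (Set.left_mem_Icc.2 hab) (Set.right_mem_Icc.2 hab) ht₀ (sub_nonneg.2 ht₁)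
      (add_sub_cancel t 1)
    simp only [smul_eq_mul] at h₁ h₂
    rw [show t * a + (1 - t) * b = a + b - ((1 - t) * a + t * b) by ring] at h₂
    linarith
  have h := intervalIntegral.integral_mono_on hab intervalIntegrable_const
    (hfi.add hfi.comp_add_sub) hchord
  rw [integral_add_comp_add_sub hfi, intervalIntegral.integral_const, smul_eq_mul] at h
  linarith

end HermiteHadamard

noncomputable def logTwoSin (t : ℝ) : ℝ := log (2 * sin (π * t))

lemma logTwoSin_one_sub (t : ℝ) : logTwoSin (1 - t) = logTwoSin t := by
  rw [logTwoSin, logTwoSin, mul_one_sub, sin_pi_sub]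

lemma logTwoSin_zero : logTwoSin 0 = 0 := by simp [logTwoSin]

lemma logTwoSin_one_sixth : logTwoSin (1 / 6) = 0 := by
  rw [logTwoSin, mul_one_div, sin_pi_div_six]; norm_num

lemma logTwoSin_five_sixths : logTwoSin (5 / 6) = 0 := by
  rw [show (5 / 6 : ℝ) = 1 - 1 / 6 by norm_num, logTwoSin_one_sub, logTwoSin_one_sixth]

lemma logTwoSin_le_log_two (t : ℝ) : logTwoSin t ≤ log 2 := by
  rw [logTwoSin, ← log_abs]
  rcases (abs_nonneg (2 * sin (π * t))).eq_or_lt with h | h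
  · rw [← h, log_zero]; positivity
  · refine log_le_log h ?_
    rw [abs_mul, abs_two]
    nlinarith [abs_sin_le_one (π * t)]

lemma intervalIntegrable_logTwoSin (a b : ℝ) : IntervalIntegrable logTwoSin volume a b :=
  MeromorphicOn.intervalIntegrable_log (f := fun t ↦ 2 * sin (π * t))
    (fun t _ ↦ by fun_prop)

lemma two_mul_sin_pi_mul_pos {t : ℝ} (ht : t ∈ Set.Ioo 0 1) : 0 < 2 * sin (π * t) :=
  mul_pos two_pos <|
    sin_pos_of_pos_of_lt_pi (by nlinarith [pi_pos, ht.1]) (by nlinarith [pi_pos, ht.2])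

lemma concaveOn_logTwoSin : ConcaveOn ℝ (Set.Ioo 0 1) logTwoSin := by
  refine ⟨convex_Ioo 0 1, fun x hx y hy a b ha hb hab ↦ ?_⟩
  have hx' := two_mul_sin_pi_mul_pos hx
  have hy' := two_mul_sin_pi_mul_pos hy
  have hsin := strictConcaveOn_sin_Icc.concaveOn.2
    (⟨by nlinarith [pi_pos, hx.1], by nlinarith [pi_pos, hx.2]⟩ : π * x ∈ Set.Icc 0 π)
    (⟨by nlinarith [pi_pos, hy.1], by nlinarith [pi_pos, hy.2]⟩ : π * y ∈ Set.Icc 0 π) ha hb hab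
  simp only [smul_eq_mul] at hsin ⊢
  rw [show a * (π * x) + b * (π * y) = π * (a * x + b * y) by ring] at hsin
  calc a * logTwoSin x + b * logTwoSin y
      ≤ log (a * (2 * sin (π * x)) + b * (2 * sin (π * y))) :=
        strictConcaveOn_log_Ioi.concaveOn.2 hx' hy' ha hb hab
    _ ≤ logTwoSin (a * x + b * y) :=
        log_le_log (convex_Ioi (0 : ℝ) hx' hy' ha hb hab) (by linarith)

lemma logTwoSin_nonneg {t : ℝ} (ht : t ∈ Set.Icc (1 / 6) (5 / 6)) : 0 ≤ logTwoSin t := by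
  have h := concaveOn_logTwoSin.ge_on_segment (x := 1 / 6) (y := 5 / 6)
    ⟨by norm_num, by norm_num⟩ ⟨by norm_num, by norm_num⟩ (by rwa [segment_eq_Icc (by norm_num)])
  rwa [logTwoSin_one_sixth, logTwoSin_five_sixths, min_self] at h

lemma logTwoSin_nonpos_of_le_one_sixth {t : ℝ} (h0 : 0 ≤ t) (ht : t ≤ 1 / 6) :
    logTwoSin t ≤ 0 := by
  rcases h0.eq_or_lt with rfl | h0
  · exact logTwoSin_zero.le
  · have h := concaveOn_logTwoSin.left_le_of_le_right'' (y := 1 / 6) ⟨h0, by linarith⟩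
      (⟨by norm_num, by norm_num⟩ : (5 / 6 : ℝ) ∈ Set.Ioo 0 1) ht (by norm_num)
      (by rw [logTwoSin_one_sixth, logTwoSin_five_sixths])
    rwa [logTwoSin_one_sixth] at h

lemma logTwoSin_nonpos_of_five_sixths_le {t : ℝ} (ht : 5 / 6 ≤ t) (h1 : t ≤ 1) :
    logTwoSin t ≤ 0 := by
  rw [← logTwoSin_one_sub]
  exact logTwoSin_nonpos_of_le_one_sixth (by linarith) (by linarith)

lemma integral_logTwoSin_zero_one : ∫ t in (0 : ℝ)..1, logTwoSin t = 0 := by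
  have hlog_mul :
      ∫ u in (0 : ℝ)..π, log (2 * sin u) = ∫ u in (0 : ℝ)..π, (log 2 + log (sin u)) := by
    refine intervalIntegral.integral_congr_ae ?_
    filter_upwards [Measure.ae_ne volume π] with u hne hu
    rw [Set.uIoc_of_le pi_pos.le] at hu
    exact log_mul two_ne_zero (sin_pos_of_pos_of_lt_pi hu.1 (lt_of_le_of_ne hu.2 hne)).ne'
  simp only [logTwoSin]
  rw [intervalIntegral.integral_comp_mul_left (fun u ↦ log (2 * sin u)) pi_ne_zero, mul_zero,
    mul_one, hlog_mul, intervalIntegral.integral_add intervalIntegrable_const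
      (g := fun u ↦ log (sin u)) intervalIntegrable_log_sin, integral_log_sin_zero_pi,
    intervalIntegral.integral_const, smul_eq_mul]
  ring

lemma integral_logTwoSin_to_five_sixths_nonneg {x : ℝ} (h0 : 0 ≤ x) (h1 : x ≤ 1) :
    0 ≤ ∫ t in x..5 / 6, logTwoSin t := by
  have hI := intervalIntegrable_logTwoSin
  rcases le_total x (1 / 6) with hx | hx
  · have h₁ := intervalIntegral.integral_add_adjacent_intervals (hI 0 x) (hI x (5 / 6))
    have h₂ := intervalIntegral.integral_add_adjacent_intervals (hI 0 (5 / 6)) (hI (5 / 6) 1)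
    have h₃ := intervalIntegral.integral_nonpos h0 fun t ht ↦ logTwoSin_nonpos_of_le_one_sixth ht.1 (ht.2.trans hx)
    have h₄ := intervalIntegral.integral_nonpos (by norm_num) fun t ht ↦ logTwoSin_nonpos_of_five_sixths_le ht.1 ht.2
    rw [integral_logTwoSin_zero_one] at h₂
    linarith
  rcases le_total x (5 / 6) with hx' | hx'
  · exact intervalIntegral.integral_nonneg hx' fun t ht ↦ logTwoSin_nonneg ⟨hx.trans ht.1, ht.2⟩
  · rw [intervalIntegral.integral_symm, neg_nonneg]
    exact intervalIntegral.integral_nonpos hx' fun t ht ↦ logTwoSin_nonpos_of_five_sixths_le ht.1 (ht.2.trans h1)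

lemma integral_logTwoSin_le_sub_mul_midpoint {a b : ℝ} (ha : 0 < a) (hab : a ≤ b) (hb : b < 1) :
    ∫ t in a..b, logTwoSin t ≤ (b - a) * logTwoSin ((a + b) / 2) :=
  (concaveOn_logTwoSin.subset (Set.Icc_subset_Ioo ha hb) (convex_Icc a b))
    |>.integral_le_sub_mul_midpoint hab (intervalIntegrable_logTwoSin a b)

lemma sub_mul_average_le_integral_logTwoSin {a b : ℝ} (ha : 0 < a) (hab : a ≤ b) (hb : b < 1) :
    (b - a) * ((logTwoSin a + logTwoSin b) / 2) ≤ ∫ t in a..b, logTwoSin t :=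
  (concaveOn_logTwoSin.subset (Set.Icc_subset_Ioo ha hb) (convex_Icc a b))
    |>.sub_mul_average_le_integral hab (intervalIntegrable_logTwoSin a b)

noncomputable def logTwoSinSum (N m : ℕ) : ℝ := ∑ j ∈ Icc 1 m, logTwoSin (j / N)

lemma logTwoSinSum_zero (N : ℕ) : logTwoSinSum N 0 = 0 := by simp [logTwoSinSum]

lemma logTwoSinSum_succ (N m : ℕ) :
    logTwoSinSum N (m + 1) = logTwoSinSum N m + logTwoSin ((m + 1) / N) := by
  rw [logTwoSinSum, sum_Icc_succ_top (by omega), Nat.cast_succ, logTwoSinSum]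

lemma mul_integral_le_logTwoSinSum {N m : ℕ} (hm : m < N) :
    N * ∫ t in (1 / 2) / N..(m + 1 / 2) / N, logTwoSin t ≤ logTwoSinSum N m := by
  induction m with
  | zero => simp [logTwoSinSum_zero]
  | succ m ih =>
    have hN : (0 : ℝ) < N := Nat.cast_pos.2 (by omega)
    have hmN : (m : ℝ) + 1 + 1 / 2 < N := by
      have : ((m + 2 : ℕ) : ℝ) ≤ N := Nat.cast_le.2 hm
      push_cast at this; linarith
    have hcell := integral_logTwoSin_le_sub_mul_midpoint (a := (m + 1 / 2) / N)
      (b := (m + 1 + 1 / 2) / N) (by positivity) (by gcongr; linarith)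
      ((div_lt_one hN).2 hmN)
    rw [show ((m : ℝ) + 1 + 1 / 2) / N - (m + 1 / 2) / N = 1 / N by ring,
      show ((m + 1 / 2) / N + (m + 1 + 1 / 2) / N) / 2 = ((m : ℝ) + 1) / N by ring] at hcell
    have hsplit := intervalIntegral.integral_add_adjacent_intervals
      (intervalIntegrable_logTwoSin (1 / 2 / N) ((m + 1 / 2) / N))
      (intervalIntegrable_logTwoSin _ ((m + 1 + 1 / 2) / N))
    rw [logTwoSinSum_succ, Nat.cast_succ, ← hsplit, mul_add]
    have hstep : (N : ℝ) * ∫ t in (m + 1 / 2) / N..(m + 1 + 1 / 2) / N, logTwoSin t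
        ≤ logTwoSin ((m + 1) / N) := by
      calc _ ≤ (N : ℝ) * (1 / N * logTwoSin ((m + 1) / N)) := by gcongr
        _ = logTwoSin ((m + 1) / N) := by field_simp
    linarith [ih (by omega)]

lemma two_mul_logTwoSinSum_le {N m : ℕ} (hm₁ : 1 ≤ m) (hm : m < N) :
    2 * logTwoSinSum N m ≤
      2 * N * (∫ t in 1 / N..m / N, logTwoSin t) + logTwoSin (1 / N) + logTwoSin (m / N) := by
  induction m, hm₁ using Nat.le_induction with
  | base =>
    have h := logTwoSinSum_succ N 0
    rw [logTwoSinSum_zero, Nat.cast_zero, zero_add] at h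
    rw [h, Nat.cast_one, intervalIntegral.integral_same]
    linarith
  | succ m hm₁ ih =>
    have hN : (0 : ℝ) < N := Nat.cast_pos.2 (by omega)
    have hmN : (m : ℝ) + 1 < N := by exact_mod_cast hm
    have hcell := sub_mul_average_le_integral_logTwoSin (a := m / N) (b := (m + 1) / N)
      (div_pos (by exact_mod_cast hm₁) hN) (by gcongr; linarith) ((div_lt_one hN).2 hmN)
    rw [show ((m : ℝ) + 1) / N - m / N = 1 / N by ring] at hcell
    have hsplit := intervalIntegral.integral_add_adjacent_intervals
      (intervalIntegrable_logTwoSin (1 / N) (m / N)) (intervalIntegrable_logTwoSin _ ((m + 1) / N))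
    rw [logTwoSinSum_succ, Nat.cast_succ, ← hsplit]
    have hstep : logTwoSin (m / N) + logTwoSin ((m + 1) / N)
        ≤ 2 * N * ∫ t in m / N..(m + 1) / N, logTwoSin t := by
      calc _ = 2 * N * (1 / N * ((logTwoSin (m / N) + logTwoSin ((m + 1) / N)) / 2)) := by
            field_simp
        _ ≤ _ := by gcongr
    linarith [ih (by omega)]

lemma logTwoSinSum_le {N m : ℕ} (hm : m < N) :
    logTwoSinSum N m ≤ N * (∫ t in 1 / N..5 / 6, logTwoSin t) + log 2 := by
  have hN : (0 : ℝ) < N := Nat.cast_pos.2 (by omega)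
  have hN1 : 1 / (N : ℝ) ≤ 1 := by rw [div_le_one hN]; exact_mod_cast (by omega : 1 ≤ N)
  rcases Nat.eq_zero_or_pos m with rfl | hm₁
  · rw [logTwoSinSum_zero]
    have := integral_logTwoSin_to_five_sixths_nonneg (by positivity) hN1
    positivity
  have hsplit := intervalIntegral.integral_add_adjacent_intervals
    (intervalIntegrable_logTwoSin (1 / N) (m / N)) (intervalIntegrable_logTwoSin _ (5 / 6))
  have htail := integral_logTwoSin_to_five_sixths_nonneg (x := m / N) (by positivity)
    (div_le_one_of_le₀ (by exact_mod_cast hm.le) hN.le)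
  have hsum := two_mul_logTwoSinSum_le hm₁ hm
  rw [← hsplit, mul_add]
  linarith [mul_nonneg hN.le htail, logTwoSin_le_log_two (1 / N), logTwoSin_le_log_two (m / N)]

lemma prod_four_mul_sin_sq_eq_exp {N m : ℕ} (hm : m < N) :
    ∏ j ∈ Icc 1 m, 4 * sin (π * j / N) ^ 2 = exp (2 * logTwoSinSum N m) := by
  rw [logTwoSinSum, mul_sum, exp_sum]
  refine prod_congr rfl fun j hj ↦ ?_
  have hj := mem_Icc.1 hj
  have hN : (0 : ℝ) < N := Nat.cast_pos.2 (by omega)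
  have hpos := two_mul_sin_pi_mul_pos (t := j / N)
    ⟨by have : (0 : ℝ) < j := by exact_mod_cast hj.1
        positivity,
     (div_lt_one hN).2 (by exact_mod_cast hj.2.trans_lt hm)⟩
  rw [logTwoSin, two_mul, exp_add, exp_log hpos, mul_div_assoc]
  ring

lemma log_ciSup_exp {ι : Type*} [Finite ι] [Nonempty ι] (g : ι → ℝ) :
    log (⨆ i, exp (g i)) = ⨆ i, g i := by
  rw [← Monotone.map_ciSup_of_continuousAt continuous_exp.continuousAt exp_monotone
    (Set.finite_range g).bddAbove, log_exp]

lemma tendsto_intervalIntegral_of_tendsto {α : Type*} {f : ℝ → ℝ}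
    (hf : ∀ a b, IntervalIntegrable f volume a b) {l : Filter α} {u v : α → ℝ} {a b : ℝ}
    (hu : Tendsto u l (nhds a)) (hv : Tendsto v l (nhds b)) :
    Tendsto (fun x ↦ ∫ t in u x..v x, f t) l (nhds (∫ t in a..b, f t)) := by
  have hF := intervalIntegral.continuous_primitive hf 0
  have h := ((hF.tendsto b).comp hv).sub ((hF.tendsto a).comp hu)
  simp only [Function.comp_def, intervalIntegral.integral_interval_sub_left (hf _ _) (hf _ _)] at h
  exact h

theorem tendsto_iSup_logTwoSinSum_div :
    Tendsto (fun N : ℕ ↦ (⨆ m : Fin N, logTwoSinSum N m) / N) atTop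
      (nhds (∫ t in (0 : ℝ)..5 / 6, logTwoSin t)) := by
  set M : ℕ → ℕ := fun N ↦ ⌊5 / 6 * (N : ℝ)⌋₊
  have hM : Tendsto (fun N : ℕ ↦ (M N : ℝ) / N) atTop (nhds (5 / 6)) :=
    (tendsto_nat_floor_mul_div_atTop (by norm_num)).comp tendsto_natCast_atTop_atTop
  have hlower : Tendsto (fun N : ℕ ↦ ∫ t in (1 / 2) / N..(M N + 1 / 2) / N, logTwoSin t) atTop
      (nhds (∫ t in (0 : ℝ)..5 / 6, logTwoSin t)) := by
    refine tendsto_intervalIntegral_of_tendsto intervalIntegrable_logTwoSin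
      (tendsto_const_div_atTop_nhds_zero_nat _) ?_
    simpa [add_div] using hM.add (tendsto_const_div_atTop_nhds_zero_nat (1 / 2 : ℝ))
  have hupper : Tendsto (fun N : ℕ ↦ (∫ t in 1 / N..5 / 6, logTwoSin t) + log 2 / N) atTop
      (nhds (∫ t in (0 : ℝ)..5 / 6, logTwoSin t)) := by
    simpa using (tendsto_intervalIntegral_of_tendsto intervalIntegrable_logTwoSin
      (tendsto_const_div_atTop_nhds_zero_nat 1) tendsto_const_nhds).add
      (tendsto_const_div_atTop_nhds_zero_nat (log 2))
  refine tendsto_of_tendsto_of_tendsto_of_le_of_le' hlower hupper ?_ ?_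
  all_goals
    filter_upwards [eventually_gt_atTop 0] with N hN
    have : Nonempty (Fin N) := ⟨⟨0, hN⟩⟩
    have hN' : (0 : ℝ) < N := Nat.cast_pos.2 hN
  · have hMN : M N < N := (Nat.floor_lt (by positivity)).2 (by linarith)
    rw [le_div_iff₀ hN', mul_comm]
    exact (mul_integral_le_logTwoSinSum hMN).trans
      (le_ciSup (f := fun m : Fin N ↦ logTwoSinSum N m) (Set.finite_range _).bddAbove ⟨M N, hMN⟩)
  · rw [div_le_iff₀ hN', add_mul, div_mul_cancel₀ _ hN'.ne', mul_comm]
    exact ciSup_le fun m ↦ logTwoSinSum_le m.2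

/-- With `a_m = ∏_{j=1}^m 4 sin²(πj/N)` for `0 ≤ m ≤ N-1`,
`lim_{N→∞} (1/N) log(max_{0≤m≤N-1} a_m) = 2 ∫_0^{5/6} log(2 sin(πt)) dt`. -/
theorem stmt7 :
    Filter.Tendsto
      (fun N : ℕ => (1 / (N : ℝ)) *
        Real.log (⨆ m : Fin N,
          ∏ j ∈ Finset.Icc 1 (m : ℕ), 4 * Real.sin (Real.pi * j / N) ^ 2))
      Filter.atTop
      (nhds (2 * ∫ t in (0 : ℝ)..(5 / 6 : ℝ), Real.log (2 * Real.sin (Real.pi * t)))) := by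
  refine (tendsto_iSup_logTwoSinSum_div.const_mul 2).congr' ?_
  filter_upwards [eventually_gt_atTop 0] with N hN
  have : Nonempty (Fin N) := ⟨⟨0, hN⟩⟩
  simp_rw [prod_four_mul_sin_sq_eq_exp (Fin.is_lt _)]
  rw [log_ciSup_exp, ← mul_iSup_of_nonneg two_pos.le]
  ring
end

section
/- Fix ħ > 0 and a natural number n, and let He_n denote the n-th (probabilists') Hermite polynomial. Then the function f : ℝ → ℝ defined by f(x) = He_n(√(2/ħ)·x) · exp(−x²/(2ħ)) is a nonzero, smooth, square-integrable function satisfying the harmonic-oscillator eigenvalue equation (1/2)·( x²·f(x) − ħ²·f''(x) ) = ħ·(n + 1/2)·f(x) for all x ∈ ℝ. Hence each quantized energy E = ħ(n + 1/2) is attained by a square-integrable eigenfunction. -/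
open Real MeasureTheory

open Polynomial in
theorem my_derivative_hermite (n : ℕ) :
    derivative (hermite (n + 1)) = (n + 1 : ℤ[X]) * hermite n := by
  induction n with
  | zero => simp [hermite_succ, hermite_zero]
  | succ m ih =>
      rw [hermite_succ (m + 1), derivative_sub, derivative_mul, derivative_X,
        one_mul, ih, derivative_mul]
      simp only [derivative_add, derivative_natCast, derivative_one, add_zero,
        zero_add, zero_mul]
      push_cast
      linear_combination (-(m : ℤ[X]) - 1) * hermite_succ m

open Polynomial in
theorem my_hermite_ode (n : ℕ) :
    derivative (derivative (hermite n)) =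
      X * derivative (hermite n) - (n : ℤ[X]) * hermite n := by
  cases n with
  | zero => simp [hermite_zero]
  | succ m =>
      rw [my_derivative_hermite m, derivative_mul]
      simp only [derivative_add, derivative_natCast, derivative_one, add_zero,
        zero_add, zero_mul]
      push_cast
      linear_combination ((m : ℤ[X]) + 1) * hermite_succ m

open Polynomial in
theorem contDiff_polyeval (P : ℝ[X]) : ContDiff ℝ (⊤ : ℕ∞) fun x : ℝ => P.eval x := by
  induction P using Polynomial.induction_on' with
  | add p q hp hq => simpa [eval_add] using hp.add hq
  | monomial k a =>
      simp only [eval_monomial]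
      exact contDiff_const.mul (contDiff_id.pow k)

theorem integrable_pow_gauss {b : ℝ} (hb : 0 < b) (k : ℕ) :
    Integrable (fun x : ℝ => x ^ k * Real.exp (-b * x ^ 2)) := by
  have hk : (-1 : ℝ) < (k : ℝ) :=
    lt_of_lt_of_le neg_one_lt_zero (Nat.cast_nonneg k)
  have h := integrable_rpow_mul_exp_neg_mul_sq hb hk
  simpa [Real.rpow_natCast] using h

open Polynomial in
theorem integrable_polyGauss {b : ℝ} (hb : 0 < b) (P : ℝ[X]) :
    Integrable (fun x : ℝ => P.eval x * Real.exp (-b * x ^ 2)) := by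
  induction P using Polynomial.induction_on' with
  | add p q hp hq => simpa [eval_add, add_mul, Pi.add_def] using hp.add hq
  | monomial k a =>
      simpa [eval_monomial, mul_assoc] using (integrable_pow_gauss hb k).const_mul a

open Polynomial in
theorem hasDerivAt_polyGauss {b : ℝ} (hb : b ≠ 0) (P : ℝ[X]) (x : ℝ) :
    HasDerivAt (fun x : ℝ => P.eval x * Real.exp (-x ^ 2 / (2 * b)))
      ((P.derivative - C b⁻¹ * (X * P)).eval x * Real.exp (-x ^ 2 / (2 * b))) x := by
  have h1 : HasDerivAt (fun x : ℝ => -x ^ 2 / (2 * b)) (-(x / b)) x := by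
    have := ((hasDerivAt_pow 2 x).neg).div_const (2 * b)
    refine this.congr_deriv ?_
    field_simp
    ring
  have hg := h1.exp
  have hp := P.hasDerivAt x
  have := hp.mul hg
  refine this.congr_deriv ?_
  simp only [eval_sub, eval_mul, eval_C, eval_X]
  field_simp
  ring

/-- For `hb > 0` and `n : ℕ`, the function
`f(x) = He_n(√(2/hb)·x) · exp(-x²/(2hb))` (with `He_n` the probabilists' Hermite
polynomial) is a nonzero, smooth, square-integrable solution of the
harmonic-oscillator eigenvalue equation
`(1/2)(x² f(x) - hb² f''(x)) = hb(n + 1/2) f(x)`. -/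
theorem stmt10 (hb : ℝ) (hhb : 0 < hb) (n : ℕ) (f : ℝ → ℝ)
    (hf : ∀ x : ℝ, f x =
      Polynomial.aeval (Real.sqrt (2 / hb) * x) (Polynomial.hermite n) *
        Real.exp (-x ^ 2 / (2 * hb))) :
    f ≠ 0 ∧ ContDiff ℝ (⊤ : ℕ∞) f ∧
    MeasureTheory.Integrable (fun x : ℝ => (f x) ^ 2) MeasureTheory.volume ∧
    ∀ x : ℝ, (1 / 2) * (x ^ 2 * f x - hb ^ 2 * deriv (deriv f) x)
      = hb * ((n : ℝ) + 1 / 2) * f x := by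
  classical
  set c : ℝ := Real.sqrt (2 / hb) with hc
  have hbne : hb ≠ 0 := ne_of_gt hhb
  have hc2 : c ^ 2 = 2 / hb := Real.sq_sqrt (by positivity)
  have hcpos : 0 < c := Real.sqrt_pos.mpr (by positivity)
  set Q : Polynomial ℝ := (Polynomial.hermite n).map (Int.castRingHom ℝ) with hQ
  have haeval : ∀ y : ℝ, Polynomial.aeval y (Polynomial.hermite n) = Q.eval y := by
    intro y
    rw [Polynomial.aeval_def, Polynomial.eval₂_eq_eval_map]
    rfl
  set P1 : Polynomial ℝ := Q.comp (Polynomial.C c * Polynomial.X) with hP1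
  have hP1eval : ∀ x : ℝ, P1.eval x = Q.eval (c * x) := by
    intro x; simp [hP1]
  have hfe : ∀ x : ℝ, f x = P1.eval x * Real.exp (-x ^ 2 / (2 * hb)) := by
    intro x
    rw [hf x, haeval, hP1eval]
  have hQode : ∀ u : ℝ, Q.derivative.derivative.eval u
      = u * Q.derivative.eval u - (n : ℝ) * Q.eval u := by
    intro u
    have h := congrArg (fun p : Polynomial ℤ =>
      Polynomial.eval u (p.map (Int.castRingHom ℝ))) (my_hermite_ode n)
    simpa [hQ, Polynomial.derivative_map] using h
  set D : Polynomial ℝ → Polynomial ℝ :=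
    fun P => P.derivative - Polynomial.C hb⁻¹ * (Polynomial.X * P) with hD
  have hderiv1 : deriv f = fun x => (D P1).eval x * Real.exp (-x ^ 2 / (2 * hb)) := by
    funext x
    have hfun : f = fun x => P1.eval x * Real.exp (-x ^ 2 / (2 * hb)) := funext hfe
    rw [hfun]
    exact (hasDerivAt_polyGauss hbne P1 x).deriv
  have hderiv2 : ∀ x, deriv (deriv f) x
      = (D (D P1)).eval x * Real.exp (-x ^ 2 / (2 * hb)) := by
    intro x
    rw [hderiv1]
    exact (hasDerivAt_polyGauss hbne (D P1) x).deriv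
  refine ⟨?_, ?_, ?_, ?_⟩
  · -- nonzero
    have hQne : Q ≠ 0 := by
      intro h
      have h2 : (Polynomial.hermite n).map (Int.castRingHom ℝ)
          = (0 : Polynomial ℤ).map (Int.castRingHom ℝ) := by
        simpa [hQ] using h
      exact (Polynomial.hermite_monic n).ne_zero
        (Polynomial.map_injective _ Int.cast_injective h2)
    have hy : ∃ y : ℝ, Q.eval y ≠ 0 := by
      by_contra h
      push_neg at h
      exact hQne (Polynomial.zero_of_eval_zero Q h)
    obtain ⟨y, hy⟩ := hy
    intro hf0
    have h0 : f (y / c) = 0 := by rw [hf0]; rfl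
    rw [hfe (y / c), hP1eval, mul_div_cancel₀ y (ne_of_gt hcpos)] at h0
    exact hy ((mul_eq_zero.mp h0).resolve_right (Real.exp_ne_zero _))
  · -- smooth
    have h : ContDiff ℝ (⊤ : ℕ∞) fun x : ℝ => P1.eval x * Real.exp (-x ^ 2 / (2 * hb)) :=
      (contDiff_polyeval P1).mul
        (Real.contDiff_exp.comp (((contDiff_id.pow 2).neg).div_const _))
    exact (funext hfe : f = _) ▸ h
  · -- square integrable
    have hkey : (fun x : ℝ => (f x) ^ 2)
        = fun x : ℝ => (P1 ^ 2).eval x * Real.exp (-hb⁻¹ * x ^ 2) := by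
      funext x
      rw [hfe x, mul_pow, Polynomial.eval_pow, pow_two (Real.exp _), ← Real.exp_add]
      congr 1
      field_simp
      ring
    rw [hkey]
    exact integrable_polyGauss (by positivity) (P1 ^ 2)
  · -- eigenvalue equation
    intro x
    rw [hderiv2 x, hfe x]
    have e1 : P1.eval x = Q.eval (c * x) := hP1eval x
    have hP1d : P1.derivative
        = Polynomial.C c * Q.derivative.comp (Polynomial.C c * Polynomial.X) := by
      rw [hP1, Polynomial.derivative_comp]
      simp only [Polynomial.derivative_mul, Polynomial.derivative_C,
        Polynomial.derivative_X, zero_mul, mul_one, zero_add]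
    have e2 : P1.derivative.eval x = c * Q.derivative.eval (c * x) := by
      rw [hP1d]; simp
    have e3 : P1.derivative.derivative.eval x
        = c ^ 2 * Q.derivative.derivative.eval (c * x) := by
      rw [hP1d, Polynomial.derivative_mul, Polynomial.derivative_C,
        Polynomial.derivative_comp]
      simp only [Polynomial.derivative_mul, Polynomial.derivative_C,
        Polynomial.derivative_X, zero_mul, mul_one, zero_add, Polynomial.eval_add,
        Polynomial.eval_mul, Polynomial.eval_C, Polynomial.eval_comp,
        Polynomial.eval_X]
      ring
    have hDD : (D (D P1)).eval x
        = P1.derivative.derivative.eval x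
          - hb⁻¹ * (2 * x * P1.derivative.eval x + P1.eval x)
          + hb⁻¹ * hb⁻¹ * x ^ 2 * P1.eval x := by
      simp only [hD, Polynomial.derivative_sub, Polynomial.derivative_mul,
        Polynomial.derivative_C, Polynomial.derivative_X, Polynomial.eval_sub,
        Polynomial.eval_mul, Polynomial.eval_add, Polynomial.eval_C, Polynomial.eval_X,
        zero_mul, one_mul, zero_add]
      ring
    rw [hDD, e1, e2, e3, hQode (c * x), hc2]
    field_simp
    ring
end

section
/- Fix ħ > 0 and a real number E such that E ≠ ħ(n + 1/2) for every natural number n. If f : ℝ → ℝ is twice continuously differentiable, square-integrable on ℝ, and satisfies (1/2)·( x²·f(x) − ħ²·f''(x) ) = E·f(x) for all x ∈ ℝ, then f is identically zero. That is, the harmonic-oscillator eigenvalue equation has nonzero square-integrable solutions only for the quantized energies E = ħ(n + 1/2). -/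
/-!
The function `g = ħ f' + x f` (the annihilation operator applied to `f`) solves the same equation
with energy `E - ħ`, and two integrations by parts give `‖g‖² = (2E - ħ) ‖f‖²`. Hence a nonzero
solution has `ħ ≤ 2E`, and unless `2E = ħ` its image `g` is again a nonzero solution. Lowering the
energy in steps of `ħ` must stop, so `E = ħ (n + 1/2)`.

The integrations by parts need `f'²` and `x² f²` integrable. For `|x| ≥ |E| + 1` the square `f²`
is convex (since `ħ² f f'' = (x² - 2E) f² ≥ 0`), so integrability forces `f f' ≤ 0` there (`≥ 0`
on the left), which bounds `∫_{-b}^{b} (ħ² f'² + x² f²) = ħ² [f f']_{-b}^{b} + 2E ∫_{-b}^{b} f²`.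
-/

open MeasureTheory Set Filter

lemma integrable_mul_of_integrable_sq {α : Type*} [MeasurableSpace α] {μ : Measure α}
    {u v : α → ℝ} (hu : AEStronglyMeasurable u μ) (hv : AEStronglyMeasurable v μ)
    (hu2 : Integrable (fun x => u x ^ 2) μ) (hv2 : Integrable (fun x => v x ^ 2) μ) :
    Integrable (fun x => u x * v x) μ :=
  ((memLp_two_iff_integrable_sq hu).2 hu2).integrable_mul ((memLp_two_iff_integrable_sq hv).2 hv2)

lemma ConvexOn.deriv_nonpos_of_integrableOn_Ioi {h : ℝ → ℝ} {R a : ℝ}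
    (hconv : ConvexOn ℝ (Ici R) h) (hint : IntegrableOn h (Ioi R)) (hRa : R ≤ a)
    (hd : DifferentiableAt ℝ h a) (ha : 0 ≤ h a) : deriv h a ≤ 0 := by
  by_contra! hpos
  have tangent : ∀ x ∈ Ioi (a + 1), deriv h a ≤ h x := by
    intro x hx
    have hax : a + 1 < x := hx
    have hslope := hconv.deriv_le_slope hRa (hRa.trans (by linarith)) (by linarith) hd
    rw [slope_def_field, le_div_iff₀ (by linarith)] at hslope
    nlinarith
  have hconst : IntegrableOn (fun _ => deriv h a) (Ioi (a + 1)) := by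
    refine Integrable.mono' (hint.mono_set (Ioi_subset_Ioi (by linarith)))
      aestronglyMeasurable_const ?_
    filter_upwards [ae_restrict_mem measurableSet_Ioi] with x hx
    rw [Real.norm_of_nonneg hpos.le]
    exact tangent x hx
  simp [integrableOn_const_iff, hpos.ne'] at hconst

structure IsBoundState (hb E : ℝ) (f : ℝ → ℝ) : Prop where
  contDiff : ContDiff ℝ 2 f
  integrable_sq : Integrable (fun x => f x ^ 2)
  deriv_deriv : ∀ x, hb ^ 2 * deriv (deriv f) x = (x ^ 2 - 2 * E) * f x

/-- `x̂ + i p̂ = x + ħ d/dx`, that is `√(2ħ)` times the annihilation operator. -/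
noncomputable def lowering (hb : ℝ) (f : ℝ → ℝ) (x : ℝ) : ℝ := hb * deriv f x + x * f x

lemma lowering_sq (hb : ℝ) (f : ℝ → ℝ) (x : ℝ) : lowering hb f x ^ 2 =
    hb ^ 2 * deriv f x ^ 2 + x ^ 2 * f x ^ 2 + 2 * hb * (x * f x * deriv f x) := by
  rw [lowering]; ring

namespace IsBoundState

variable {hb E : ℝ} {f : ℝ → ℝ}

lemma differentiable (hf : IsBoundState hb E f) : Differentiable ℝ f :=
  hf.contDiff.differentiable (by norm_num)

lemma contDiff_one_deriv (hf : IsBoundState hb E f) : ContDiff ℝ 1 (deriv f) :=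
  (contDiff_succ_iff_deriv (n := 1)).1 hf.contDiff |>.2.2

lemma differentiable_deriv (hf : IsBoundState hb E f) : Differentiable ℝ (deriv f) :=
  hf.contDiff_one_deriv.differentiable one_ne_zero

lemma comp_neg (hf : IsBoundState hb E f) : IsBoundState hb E (fun x => f (-x)) where
  contDiff := hf.contDiff.comp contDiff_neg
  integrable_sq := hf.integrable_sq.comp_neg
  deriv_deriv x := by
    have hd : deriv (fun y => f (-y)) = fun y => -deriv f (-y) := funext (deriv_comp_neg f)
    rw [hd, deriv.fun_neg, deriv_comp_neg, neg_neg, hf.deriv_deriv, neg_sq]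

lemma hasDerivAt_sq (hf : IsBoundState hb E f) (x : ℝ) :
    HasDerivAt (fun y => f y ^ 2) (2 * (f x * deriv f x)) x := by
  simpa [mul_assoc] using (hf.differentiable x).hasDerivAt.fun_pow 2

lemma hasDerivAt_mul_deriv (hf : IsBoundState hb E f) (x : ℝ) :
    HasDerivAt (fun y => f y * deriv f y) (deriv f x ^ 2 + f x * deriv (deriv f) x) x := by
  simpa [sq] using (hf.differentiable x).hasDerivAt.fun_mul (hf.differentiable_deriv x).hasDerivAt

lemma hasDerivAt_hb_sq_mul_mul_deriv (hf : IsBoundState hb E f) (x : ℝ) :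
    HasDerivAt (fun y => hb ^ 2 * (f y * deriv f y))
      (hb ^ 2 * deriv f x ^ 2 + x ^ 2 * f x ^ 2 - 2 * E * f x ^ 2) x :=
  ((hf.hasDerivAt_mul_deriv x).const_mul (hb ^ 2)).congr_deriv
    (by linear_combination f x * hf.deriv_deriv x)

lemma convexOn_sq (hf : IsBoundState hb E f) (hhb : hb ≠ 0) :
    ConvexOn ℝ (Ici (|E| + 1)) (fun x => f x ^ 2) := by
  have hd : deriv (fun y => f y ^ 2) = fun y => 2 * (f y * deriv f y) :=
    funext fun x => (hf.hasDerivAt_sq x).deriv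
  refine convexOn_of_deriv2_nonneg (convex_Ici _)
    (hf.differentiable.continuous.pow 2).continuousOn
    (fun x _ => (hf.hasDerivAt_sq x).differentiableAt.differentiableWithinAt) ?_ ?_
  · rw [hd]
    exact fun x _ =>
      ((hf.hasDerivAt_mul_deriv x).differentiableAt.const_mul 2).differentiableWithinAt
  · intro x hx
    rw [interior_Ici, mem_Ioi] at hx
    have hpot : 0 ≤ (x ^ 2 - 2 * E) * f x ^ 2 := by
      have : 2 * E ≤ x ^ 2 := by nlinarith [le_abs_self E, abs_nonneg E]
      positivity
    have hff : 0 ≤ f x * deriv (deriv f) x := by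
      have hmul : hb ^ 2 * (f x * deriv (deriv f) x) = (x ^ 2 - 2 * E) * f x ^ 2 := by
        linear_combination f x * hf.deriv_deriv x
      exact (mul_nonneg_iff_of_pos_left (by positivity)).1 (hmul ▸ hpot)
    rw [Function.iterate_succ_apply, Function.iterate_one, hd,
      ((hf.hasDerivAt_mul_deriv x).const_mul 2).deriv]
    positivity

lemma mul_deriv_nonpos (hf : IsBoundState hb E f) (hhb : hb ≠ 0) {x : ℝ} (hx : |E| + 1 ≤ x) :
    f x * deriv f x ≤ 0 := by
  have := (hf.convexOn_sq hhb).deriv_nonpos_of_integrableOn_Ioi hf.integrable_sq.integrableOn hx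
    (hf.hasDerivAt_sq x).differentiableAt (sq_nonneg _)
  rw [(hf.hasDerivAt_sq x).deriv] at this
  linarith

lemma mul_deriv_nonneg (hf : IsBoundState hb E f) (hhb : hb ≠ 0) {x : ℝ} (hx : x ≤ -(|E| + 1)) :
    0 ≤ f x * deriv f x := by
  have := hf.comp_neg.mul_deriv_nonpos hhb (x := -x) (by linarith)
  rw [deriv_comp_neg, neg_neg] at this
  linarith

lemma integrable_kinetic_add_potential (hf : IsBoundState hb E f) (hhb : hb ≠ 0) :
    Integrable (fun x => hb ^ 2 * deriv f x ^ 2 + x ^ 2 * f x ^ 2) := by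
  have hcontf := hf.differentiable.continuous
  have hcontf' := hf.differentiable_deriv.continuous
  refine integrable_of_intervalIntegral_norm_bounded (|2 * E| * ∫ x, f x ^ 2)
    (fun _ => Continuous.integrableOn_Ioc (by fun_prop)) tendsto_neg_atTop_atBot tendsto_id ?_
  filter_upwards [eventually_ge_atTop (|E| + 1)] with b hbE
  rw [id_eq]
  have hsplit : ∫ x in -b..b, ‖hb ^ 2 * deriv f x ^ 2 + x ^ 2 * f x ^ 2‖ =
      hb ^ 2 * (f b * deriv f b) - hb ^ 2 * (f (-b) * deriv f (-b)) +
        2 * E * ∫ x in -b..b, f x ^ 2 := by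
    rw [← intervalIntegral.integral_eq_sub_of_hasDerivAt
      (fun x _ => hf.hasDerivAt_hb_sq_mul_mul_deriv x)
      (Continuous.intervalIntegrable (by fun_prop) _ _), ← intervalIntegral.integral_const_mul,
      ← intervalIntegral.integral_add (Continuous.intervalIntegrable (by fun_prop) _ _)
        (Continuous.intervalIntegrable (by fun_prop) _ _)]
    refine intervalIntegral.integral_congr fun x _ => ?_
    rw [Real.norm_of_nonneg (by positivity)]
    ring
  have hleft : 0 ≤ f (-b) * deriv f (-b) := hf.mul_deriv_nonneg hhb (by linarith)
  have hright : f b * deriv f b ≤ 0 := hf.mul_deriv_nonpos hhb hbE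
  have hsq : ∫ x in -b..b, f x ^ 2 ≤ ∫ x, f x ^ 2 := by
    rw [intervalIntegral.integral_of_le (by linarith [abs_nonneg E])]
    exact setIntegral_le_integral hf.integrable_sq (ae_of_all _ fun x => sq_nonneg (f x))
  have hsq0 : 0 ≤ ∫ x in -b..b, f x ^ 2 :=
    intervalIntegral.integral_nonneg (by linarith [abs_nonneg E]) fun x _ => sq_nonneg (f x)
  rw [hsplit]
  nlinarith [le_abs_self (2 * E), abs_nonneg (2 * E), sq_nonneg hb]

lemma integrable_deriv_sq (hf : IsBoundState hb E f) (hhb : hb ≠ 0) :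
    Integrable (fun x => deriv f x ^ 2) := by
  have hb2 : 0 < hb ^ 2 := by positivity
  refine ((hf.integrable_kinetic_add_potential hhb).div_const (hb ^ 2)).mono'
    (hf.differentiable_deriv.continuous.pow 2).aestronglyMeasurable (ae_of_all _ fun x => ?_)
  rw [Real.norm_of_nonneg (sq_nonneg _), le_div_iff₀ hb2]
  nlinarith [sq_nonneg (x * f x)]

lemma integrable_sq_mul_sq (hf : IsBoundState hb E f) (hhb : hb ≠ 0) :
    Integrable (fun x => x ^ 2 * f x ^ 2) := by
  refine (hf.integrable_kinetic_add_potential hhb).mono'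
    (by have := hf.differentiable.continuous; fun_prop) (ae_of_all _ fun x => ?_)
  rw [Real.norm_of_nonneg (by positivity)]
  nlinarith [sq_nonneg (hb * deriv f x)]

lemma integrable_mul_mul_deriv (hf : IsBoundState hb E f) (hhb : hb ≠ 0) :
    Integrable (fun x => x * f x * deriv f x) := by
  refine integrable_mul_of_integrable_sq
    (by have := hf.differentiable.continuous; fun_prop)
    hf.differentiable_deriv.continuous.aestronglyMeasurable ?_ (hf.integrable_deriv_sq hhb)
  simpa only [mul_pow] using hf.integrable_sq_mul_sq hhb

lemma energy_identity (hf : IsBoundState hb E f) (hhb : hb ≠ 0) :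
    hb ^ 2 * (∫ x, deriv f x ^ 2) + ∫ x, x ^ 2 * f x ^ 2 = 2 * E * ∫ x, f x ^ 2 := by
  have hzero := integral_eq_zero_of_hasDerivAt_of_integrable
    hf.hasDerivAt_hb_sq_mul_mul_deriv
    ((hf.integrable_kinetic_add_potential hhb).sub (hf.integrable_sq.const_mul (2 * E)))
    ((integrable_mul_of_integrable_sq hf.differentiable.continuous.aestronglyMeasurable
      hf.differentiable_deriv.continuous.aestronglyMeasurable hf.integrable_sq
      (hf.integrable_deriv_sq hhb)).const_mul _)
  rw [integral_sub (hf.integrable_kinetic_add_potential hhb)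
      (hf.integrable_sq.const_mul (2 * E)),
    integral_add ((hf.integrable_deriv_sq hhb).const_mul _) (hf.integrable_sq_mul_sq hhb),
    integral_const_mul, integral_const_mul] at hzero
  linarith

lemma integral_mul_mul_deriv (hf : IsBoundState hb E f) (hhb : hb ≠ 0) :
    ∫ x, x * f x * deriv f x = -(1 / 2) * ∫ x, f x ^ 2 := by
  have hderiv : ∀ x, HasDerivAt (fun y => y * f y ^ 2)
      (f x ^ 2 + 2 * (x * f x * deriv f x)) x := fun x =>
    ((hasDerivAt_id x).mul (hf.hasDerivAt_sq x)).congr_deriv (by simp only [id]; ring)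
  have hint : Integrable (fun x => x * f x * f x) :=
    integrable_mul_of_integrable_sq (by have := hf.differentiable.continuous; fun_prop)
      hf.differentiable.continuous.aestronglyMeasurable
      (by simpa only [mul_pow] using hf.integrable_sq_mul_sq hhb) hf.integrable_sq
  have hzero := integral_eq_zero_of_hasDerivAt_of_integrable hderiv
    (hf.integrable_sq.add ((hf.integrable_mul_mul_deriv hhb).const_mul 2))
    (by simpa only [mul_assoc, ← sq] using hint)
  rw [integral_add hf.integrable_sq ((hf.integrable_mul_mul_deriv hhb).const_mul 2),
    integral_const_mul] at hzero
  linarith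

lemma deriv_deriv_eq (hf : IsBoundState hb E f) (hhb : hb ≠ 0) :
    deriv (deriv f) = fun x => (x ^ 2 - 2 * E) * f x / hb ^ 2 :=
  funext fun x => by rw [← hf.deriv_deriv x]; field_simp

lemma hasDerivAt_deriv_deriv (hf : IsBoundState hb E f) (hhb : hb ≠ 0) (x : ℝ) :
    HasDerivAt (deriv (deriv f)) ((2 * x * f x + (x ^ 2 - 2 * E) * deriv f x) / hb ^ 2) x := by
  rw [hf.deriv_deriv_eq hhb]
  exact ((((hasDerivAt_pow 2 x).sub_const _).mul (hf.differentiable x).hasDerivAt).div_const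
    _).congr_deriv (by ring)

lemma contDiff_two_deriv (hf : IsBoundState hb E f) (hhb : hb ≠ 0) : ContDiff ℝ 2 (deriv f) := by
  refine (contDiff_succ_iff_deriv (n := 1)).2 ⟨hf.differentiable_deriv, by simp, ?_⟩
  rw [hf.deriv_deriv_eq hhb]
  have := hf.contDiff.of_le (by norm_num : (1 : WithTop ℕ∞) ≤ 2)
  fun_prop

lemma integral_sq_pos (hf : IsBoundState hb E f) (hne : f ≠ 0) : 0 < ∫ x, f x ^ 2 := by
  refine (integral_nonneg fun x => sq_nonneg (f x)).lt_of_ne fun hzero => hne ?_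
  have hae := (integral_eq_zero_iff_of_nonneg (fun x => sq_nonneg (f x)) hf.integrable_sq).1
    hzero.symm
  have hcont := hf.differentiable.continuous
  funext x
  simpa using congrFun ((Continuous.ae_eq_iff_eq volume (by fun_prop) continuous_zero).1 hae) x

lemma integral_lowering_sq (hf : IsBoundState hb E f) (hhb : hb ≠ 0) :
    ∫ x, lowering hb f x ^ 2 = (2 * E - hb) * ∫ x, f x ^ 2 := by
  simp only [lowering_sq]
  rw [integral_add
      (((hf.integrable_deriv_sq hhb).const_mul _).fun_add (hf.integrable_sq_mul_sq hhb))
      ((hf.integrable_mul_mul_deriv hhb).const_mul _),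
    integral_add ((hf.integrable_deriv_sq hhb).const_mul _) (hf.integrable_sq_mul_sq hhb),
    integral_const_mul, integral_const_mul, hf.energy_identity hhb,
    hf.integral_mul_mul_deriv hhb]
  ring

lemma hasDerivAt_lowering (hf : IsBoundState hb E f) (x : ℝ) :
    HasDerivAt (lowering hb f) (hb * deriv (deriv f) x + f x + x * deriv f x) x :=
  (((hf.differentiable_deriv x).hasDerivAt.const_mul hb).add
    ((hasDerivAt_id x).mul (hf.differentiable x).hasDerivAt)).congr_deriv (by simp only [id]; ring)

lemma lowering_isBoundState (hf : IsBoundState hb E f) (hhb : hb ≠ 0) :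
    IsBoundState hb (E - hb) (lowering hb f) where
  contDiff := by
    have := hf.contDiff_two_deriv hhb
    have := hf.contDiff
    unfold lowering
    fun_prop
  integrable_sq := by
    simp only [lowering_sq]
    exact (((hf.integrable_deriv_sq hhb).const_mul _).fun_add (hf.integrable_sq_mul_sq hhb)).fun_add
      ((hf.integrable_mul_mul_deriv hhb).const_mul _)
  deriv_deriv x := by
    have hderiv : HasDerivAt (deriv (lowering hb f))
        (hb * ((2 * x * f x + (x ^ 2 - 2 * E) * deriv f x) / hb ^ 2) + deriv f x +
          (deriv f x + x * deriv (deriv f) x)) x := by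
      rw [funext fun y => (hf.hasDerivAt_lowering y).deriv]
      exact (((hf.hasDerivAt_deriv_deriv hhb x).const_mul hb).add
        (hf.differentiable x).hasDerivAt).add
        ((hasDerivAt_id x).mul (hf.differentiable_deriv x).hasDerivAt) |>.congr_deriv
        (by simp only [id]; ring)
    rw [hderiv.deriv, lowering]
    field_simp
    linear_combination x * hf.deriv_deriv x

lemma le_two_mul_energy (hf : IsBoundState hb E f) (hhb : hb ≠ 0) (hne : f ≠ 0) : hb ≤ 2 * E := by
  have hnorm := hf.integral_lowering_sq hhb
  have hpos := hf.integral_sq_pos hne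
  have : 0 ≤ (2 * E - hb) * ∫ x, f x ^ 2 := hnorm ▸ integral_nonneg fun x => sq_nonneg _
  nlinarith

theorem exists_energy_eq_of_ne_zero (hf : IsBoundState hb E f) (hhb : 0 < hb) (hne : f ≠ 0) :
    ∃ n : ℕ, E = hb * (n + 1 / 2) := by
  obtain ⟨N, hN⟩ := exists_nat_gt (E / hb)
  rw [div_lt_iff₀ hhb] at hN
  induction N generalizing E f with
  | zero =>
    have := hf.le_two_mul_energy hhb.ne' hne
    norm_num at hN
    linarith
  | succ N ih =>
    rcases eq_or_ne (2 * E) hb with hground | hexcited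
    · exact ⟨0, by push_cast; linarith⟩
    have hlow_ne : lowering hb f ≠ 0 := fun hzero => by
      have hnorm : (2 * E - hb) * ∫ x, f x ^ 2 = 0 := by
        rw [← hf.integral_lowering_sq hhb.ne', hzero]
        simp
      exact mul_ne_zero (sub_ne_zero.2 hexcited) (hf.integral_sq_pos hne).ne' hnorm
    obtain ⟨n, hn⟩ := ih (hf.lowering_isBoundState hhb.ne') hlow_ne (by push_cast at hN; linarith)
    exact ⟨n + 1, by push_cast; linarith⟩

end IsBoundState

/-- For `hb > 0` and a real energy `E` that is not of the form
`hb(n + 1/2)` for any natural number `n`, every twice continuously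
differentiable, square-integrable solution `f : ℝ → ℝ` of the
harmonic-oscillator eigenvalue equation
`(1/2)(x² f(x) - hb² f''(x)) = E f(x)` vanishes identically. -/
theorem stmt11 (hb : ℝ) (hhb : 0 < hb) (E : ℝ)
    (hE : ∀ n : ℕ, E ≠ hb * ((n : ℝ) + 1 / 2))
    (f : ℝ → ℝ) (hreg : ContDiff ℝ 2 f)
    (hL2 : MeasureTheory.Integrable (fun x : ℝ => (f x) ^ 2) MeasureTheory.volume)
    (heq : ∀ x : ℝ, (1 / 2) * (x ^ 2 * f x - hb ^ 2 * deriv (deriv f) x) = E * f x) :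
    ∀ x : ℝ, f x = 0 := by
  have hf : IsBoundState hb E f := ⟨hreg, hL2, fun x => by linarith [heq x]⟩
  intro x
  by_contra hx
  obtain ⟨n, hn⟩ := hf.exists_energy_eq_of_ne_zero hhb fun hzero => hx (congrFun hzero x)
  exact hE n hn
end
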